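/- arXiv:2009.05746 — 8 statements merged into one kernel-verified Lean document; each statement's English description precedes it below -/
import Mathlib

section
/- Let G be a graph with a perfect matching M. An edge subset S ⊆ M is a forcing set of M if and only if S contains at least one edge of every M-alternating cycle of G. -/
open SimpleGraph

variable {V : Type*}

/-- `M` is a perfect matching of `G`, viewed as a set of edges. -/
def IsPM (G : SimpleGraph V) (M : Set (Sym2 V)) : Prop :=
  M ⊆ G.edgeSet ∧ ∀ v : V, ∃! e, e ∈ M ∧ v ∈ e

/-- `G` has a perfect matching. -/
def HasPM (G : SimpleGraph V) : Prop := ∃ M, IsPM G M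

/-- `c` is an `M`-alternating cycle of `G`: a cycle in which every vertex of the
cycle lies on exactly one edge of the cycle belonging to `M`. -/
def IsAltCycle (G : SimpleGraph V) (M : Set (Sym2 V)) {v : V} (c : G.Walk v v) : Prop :=
  c.IsCycle ∧ ∀ w ∈ c.support, ∃! e, e ∈ c.edges ∧ e ∈ M ∧ w ∈ e

/-- `S` is a forcing set of the perfect matching `M` of `G`. -/
def IsForcingSet (G : SimpleGraph V) (M S : Set (Sym2 V)) : Prop :=
  S ⊆ M ∧ ∀ M', IsPM G M' → S ⊆ M' → M' = M

/-- `S ⊆ E(G) \ M` is an anti-forcing set of `M`: `G - S` has a unique perfect matching. -/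
def IsAntiForcingSet (G : SimpleGraph V) (M S : Set (Sym2 V)) : Prop :=
  S ⊆ G.edgeSet \ M ∧ ∃! M', IsPM (G.deleteEdges S) M'

/-- `S` is a global forcing set of `G`. -/
def IsGFS (G : SimpleGraph V) (S : Set (Sym2 V)) : Prop :=
  S ⊆ G.edgeSet ∧ ∀ M M', IsPM G M → IsPM G M' → M ∩ S = M' ∩ S → M = M'

/-- `G` has a perfect matching avoiding the vertex set `A`, i.e. `G - A` has a p.m. -/
def PMAvoiding (G : SimpleGraph V) (A : Set V) : Prop :=
  ∃ M, M ⊆ G.edgeSet ∧ (∀ e ∈ M, ∀ v, v ∈ e → v ∉ A) ∧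
    ∀ v, v ∉ A → ∃! e, e ∈ M ∧ v ∈ e

/-- `c` is a nice cycle of `G`: `G - V(c)` has a perfect matching. -/
def IsNiceCycle (G : SimpleGraph V) {v : V} (c : G.Walk v v) : Prop :=
  c.IsCycle ∧ PMAvoiding G {w | w ∈ c.support}

/-- The global forcing number. -/
noncomputable def gf (G : SimpleGraph V) : ℕ :=
  sInf {k | ∃ S, IsGFS G S ∧ S.ncard = k}

/-- The anti-forcing number of a perfect matching `M`. -/
noncomputable def af (G : SimpleGraph V) (M : Set (Sym2 V)) : ℕ :=
  sInf {k | ∃ S, IsAntiForcingSet G M S ∧ S.ncard = k}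

/-- The maximum anti-forcing number. -/
noncomputable def Af (G : SimpleGraph V) : ℕ :=
  sSup {k | ∃ M, IsPM G M ∧ af G M = k}

/-- The forcing number of a perfect matching `M`. -/
noncomputable def fnum (G : SimpleGraph V) (M : Set (Sym2 V)) : ℕ :=
  sInf {k | ∃ S, IsForcingSet G M S ∧ S.ncard = k}

/-- The maximum forcing number. -/
noncomputable def Fnum (G : SimpleGraph V) : ℕ :=
  sSup {k | ∃ M, IsPM G M ∧ fnum G M = k}

/-! If an `M`-alternating cycle `C` avoids `S`, then `M ∆ E(C)` is a second perfect matching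
containing `S`. Conversely, if a perfect matching `M' ≠ M` contains `S`, then every vertex has
degree `0` or `2` in the graph with edge set `M ∆ M'`; a cycle of that graph is `M`-alternating
and misses `S ⊆ M ∩ M'`. -/

open scoped symmDiff

lemma Sym2.existsUnique_mem_and_mem_iff {α : Type*} (N : Set (Sym2 α)) (v : α) :
    (∃! e, e ∈ N ∧ v ∈ e) ↔ ∃! w, s(v, w) ∈ N := by
  constructor
  · rintro ⟨e, ⟨heN, hve⟩, huniq⟩
    obtain ⟨w, rfl⟩ := Sym2.mem_iff_exists.mp hve
    exact ⟨w, heN, fun w' hw' => Sym2.congr_right.mp (huniq _ ⟨hw', Sym2.mem_mk_left _ _⟩)⟩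
  · rintro ⟨w, hwN, huniq⟩
    refine ⟨s(v, w), ⟨hwN, Sym2.mem_mk_left _ _⟩, fun e ⟨heN, hve⟩ => ?_⟩
    obtain ⟨w', rfl⟩ := Sym2.mem_iff_exists.mp hve
    rw [huniq w' heN]

section

variable {G : SimpleGraph V} {M M' : Set (Sym2 V)}

lemma isPM_iff : IsPM G M ↔ M ⊆ G.edgeSet ∧ ∀ v, ∃! w, s(v, w) ∈ M := by
  simp only [IsPM, Sym2.existsUnique_mem_and_mem_iff]

lemma isAltCycle_iff {u : V} (c : G.Walk u u) : IsAltCycle G M c ↔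
    c.IsCycle ∧ ∀ v ∈ c.support, ∃! w, s(v, w) ∈ c.edges ∧ s(v, w) ∈ M := by
  simp only [IsAltCycle, ← and_assoc]
  exact and_congr_right fun _ => forall₂_congr fun v _ =>
    Sym2.existsUnique_mem_and_mem_iff {e | e ∈ c.edges ∧ e ∈ M} v

lemma SimpleGraph.Walk.IsCycle.exists_mem_edges_iff {u v : V} {c : G.Walk u u}
    (hc : c.IsCycle) (hv : v ∈ c.support) :
    ∃ x x', x ≠ x' ∧ ∀ w, s(v, w) ∈ c.edges ↔ w = x ∨ w = x' := by
  obtain ⟨x, x', hxx', hN⟩ := Set.ncard_eq_two.mp (hc.ncard_neighborSet_toSubgraph_eq_two hv)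
  refine ⟨x, x', hxx', fun w => ?_⟩
  rw [← Walk.adj_toSubgraph_iff_mem_edges, ← Subgraph.mem_neighborSet, hN]
  rfl

lemma IsPM.exists_mem_iff_eq (hM : IsPM G M) (v : V) : ∃ m, ∀ w, s(v, w) ∈ M ↔ w = m := by
  obtain ⟨m, hm, huniq⟩ := (isPM_iff.mp hM).2 v
  exact ⟨m, fun w => ⟨huniq w, fun h => h ▸ hm⟩⟩

lemma IsAltCycle.isPM_symmDiff {u : V} {c : G.Walk u u} (hM : IsPM G M)
    (hc : IsAltCycle G M c) : IsPM G (M ∆ {e | e ∈ c.edges}) := by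
  rw [isAltCycle_iff] at hc
  refine isPM_iff.mpr ⟨fun e he => ?_, fun v => ?_⟩
  · rcases Set.mem_symmDiff.mp he with ⟨h, -⟩ | ⟨h, -⟩
    exacts [hM.1 h, c.edges_subset_edgeSet h]
  obtain ⟨m, hm⟩ := hM.exists_mem_iff_eq v
  by_cases hv : v ∈ c.support
  · obtain ⟨x, x', hxx', hE⟩ := hc.1.exists_mem_edges_iff hv
    obtain ⟨y, ⟨hyE, hyM⟩, -⟩ := hc.2 v hv
    rw [(hm y).mp hyM] at hyE
    -- the `M`-edge at `v` is one of its two cycle edges; `M ∆ E(c)` keeps only the other one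
    obtain ⟨z, hmz, hEz⟩ :
        ∃ z, m ≠ z ∧ ∀ w, s(v, w) ∈ c.edges ↔ w = m ∨ w = z := by
      rcases (hE m).mp hyE with rfl | rfl
      · exact ⟨x', hxx', hE⟩
      · exact ⟨x, hxx'.symm, fun w => (hE w).trans or_comm⟩
    have hz : ∀ w, s(v, w) ∈ M ∆ {e | e ∈ c.edges} ↔ w = z := by
      intro w
      simp only [Set.mem_symmDiff, Set.mem_ofPred_eq, hm, hEz]
      grind
    exact ⟨z, (hz z).mpr rfl, fun w hw => (hz w).mp hw⟩
  · have hE : ∀ w, s(v, w) ∉ c.edges := fun w h => hv (c.fst_mem_support_of_mem_edges h)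
    simpa [Set.mem_symmDiff, hE] using (isPM_iff.mp hM).2 v

lemma IsPM.isCycles_fromEdgeSet_symmDiff (hM : IsPM G M) (hM' : IsPM G M') :
    (fromEdgeSet (M ∆ M')).IsCycles := by
  rintro v ⟨w, hw⟩
  obtain ⟨m, hm⟩ := hM.exists_mem_iff_eq v
  obtain ⟨m', hm'⟩ := hM'.exists_mem_iff_eq v
  have hvm : v ≠ m := (G.mem_edgeSet.mp (hM.1 ((hm m).mpr rfl))).ne
  have hvm' : v ≠ m' := (G.mem_edgeSet.mp (hM'.1 ((hm' m').mpr rfl))).ne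
  simp only [mem_neighborSet, fromEdgeSet_adj, Set.mem_symmDiff, hm, hm'] at hw
  have hmm' : m ≠ m' := by grind
  convert Set.ncard_pair hmm'
  ext w
  simp only [mem_neighborSet, fromEdgeSet_adj, Set.mem_symmDiff, hm, hm', Set.mem_insert_iff,
    Set.mem_singleton_iff]
  grind

lemma IsPM.symmDiff_subset_edgeSet (hM : IsPM G M) (hM' : IsPM G M') : M ∆ M' ⊆ G.edgeSet :=
  symmDiff_le_sup.trans (Set.union_subset hM.1 hM'.1)

lemma IsPM.fromEdgeSet_symmDiff_le (hM : IsPM G M) (hM' : IsPM G M') :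
    fromEdgeSet (M ∆ M') ≤ G :=
  (fromEdgeSet_mono (hM.symmDiff_subset_edgeSet hM')).trans_eq (fromEdgeSet_edgeSet G)

lemma IsPM.isAltCycle_mapLe [Finite V] (hM : IsPM G M) (hM' : IsPM G M') {u : V}
    {p : (fromEdgeSet (M ∆ M')).Walk u u} (hp : p.IsCycle) :
    IsAltCycle G M (p.mapLe (hM.fromEdgeSet_symmDiff_le hM')) := by
  classical
  have := Fintype.ofFinite V
  rw [isAltCycle_iff, Walk.edges_mapLe_eq_edges, Walk.support_mapLe_eq_support]
  refine ⟨hp.mapLe _, fun v hv => ?_⟩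
  have hpadj : ∀ w, s(v, w) ∈ p.edges ↔ s(v, w) ∈ M ∆ M' ∧ v ≠ w := fun w => by
    rw [← Walk.adj_toSubgraph_iff_mem_edges, ← fromEdgeSet_adj]
    exact hp.adj_toSubgraph_iff_of_isCycles (hM.isCycles_fromEdgeSet_symmDiff hM')
      (p.mem_verts_toSubgraph.mpr hv) w
  obtain ⟨m, hm⟩ := hM.exists_mem_iff_eq v
  obtain ⟨m', hm'⟩ := hM'.exists_mem_iff_eq v
  -- an edge of the cycle at `v` lies in `M ∆ M'`, so the two partners of `v` differ
  obtain ⟨x, _, -, hx⟩ := hp.exists_mem_edges_iff hv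
  have hvx := ((hpadj x).mp ((hx x).mpr (Or.inl rfl))).1
  rw [Set.mem_symmDiff, hm, hm'] at hvx
  have hmm' : m ≠ m' := by
    rcases hvx with ⟨rfl, h⟩ | ⟨rfl, h⟩
    exacts [h, Ne.symm h]
  have hvm : v ≠ m := (G.mem_edgeSet.mp (hM.1 ((hm m).mpr rfl))).ne
  refine ⟨m, ⟨?_, (hm m).mpr rfl⟩, fun w hw => (hm w).mp hw.2⟩
  rw [hpadj, Set.mem_symmDiff, hm, hm']
  exact ⟨Or.inl ⟨rfl, hmm'⟩, hvm⟩

lemma IsPM.exists_isAltCycle_edges_subset_symmDiff [Finite V] (hM : IsPM G M)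
    (hM' : IsPM G M') (hne : M ≠ M') :
    ∃ (u : V) (c : G.Walk u u), IsAltCycle G M c ∧ ∀ e ∈ c.edges, e ∈ M ∆ M' := by
  obtain ⟨e, he⟩ := Set.symmDiff_nonempty.mpr hne
  induction e using Sym2.ind with | _ a b =>
  have hab : (fromEdgeSet (M ∆ M')).Adj a b :=
    fromEdgeSet_adj _ |>.mpr ⟨he, (G.mem_edgeSet.mp (hM.symmDiff_subset_edgeSet hM' he)).ne⟩
  obtain ⟨p, hp, -⟩ :=
    (hM.isCycles_fromEdgeSet_symmDiff hM').exists_cycle_toSubgraph_verts_eq_connectedComponentSupp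
      (c := (fromEdgeSet (M ∆ M')).connectedComponentMk a) rfl ⟨b, hab⟩
  refine ⟨a, _, hM.isAltCycle_mapLe hM' hp, fun e he => ?_⟩
  rw [Walk.edges_mapLe_eq_edges] at he
  exact (edgeSet_fromEdgeSet _ ▸ p.edges_subset_edgeSet he).1

end

theorem stmt0 [Fintype V] (G : SimpleGraph V) (M S : Set (Sym2 V))
    (hM : IsPM G M) (hS : S ⊆ M) :
    IsForcingSet G M S ↔
      ∀ (v : V) (c : G.Walk v v), IsAltCycle G M c → ∃ e ∈ S, e ∈ c.edges := by
  constructor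
  · rintro ⟨-, hforce⟩ v c hc
    by_contra! hdisj
    have hN := hforce _ (hc.isPM_symmDiff hM)
      fun e he => Set.mem_symmDiff.mpr (Or.inl ⟨hS he, hdisj e he⟩)
    have hE : {e | e ∈ c.edges} = ∅ := symmDiff_eq_left.mp hN
    exact hc.1.not_nil <| Walk.edges_eq_nil.mp <|
      List.eq_nil_iff_forall_not_mem.mpr fun e he => hE.subset he
  · intro hhit
    refine ⟨hS, fun M' hM' hSM' => ?_⟩
    by_contra hne
    obtain ⟨v, c, hc, hcM⟩ := hM.exists_isAltCycle_edges_subset_symmDiff hM' (Ne.symm hne)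
    obtain ⟨e, heS, hec⟩ := hhit v c hc
    rcases Set.mem_symmDiff.mp (hcM e hec) with ⟨-, h⟩ | ⟨-, h⟩
    exacts [h (hSM' heS), h (hS heS)]
end

section
/- Let G be a graph with a perfect matching M. An edge subset S ⊆ E(G)\M is an anti-forcing set of M if and only if S contains at least one edge of every M-alternating cycle of G. -/
open SimpleGraph

variable {V : Type*}

/-!
If an `M`-alternating cycle avoids `S`, exchanging the `M`-edges and the non-`M`-edges along it
gives a second perfect matching of `G - S`. Conversely, the symmetric difference of two distinct
perfect matchings of `G - S` is a nonempty union of disjoint cycles alternating between them, and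
any one of these is an `M`-alternating cycle of `G` with no edge in `S`.
-/

theorem SimpleGraph.existsUnique_mem_edgeSet_iff {K : SimpleGraph V} (v : V) :
    (∃! e, e ∈ K.edgeSet ∧ v ∈ e) ↔ ∃! w, K.Adj v w := by
  constructor
  · rintro ⟨e, ⟨he, hv⟩, huniq⟩
    obtain ⟨w, rfl⟩ := Sym2.mem_iff_exists.mp hv
    exact ⟨w, he, fun w' hw' => Sym2.congr_right.mp (huniq _ ⟨hw', Sym2.mem_mk_left _ _⟩)⟩
  · rintro ⟨w, hw, huniq⟩
    refine ⟨s(v, w), ⟨hw, Sym2.mem_mk_left _ _⟩, fun e ⟨he, hv⟩ => ?_⟩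
    obtain ⟨w', rfl⟩ := Sym2.mem_iff_exists.mp hv
    rw [huniq w' he]

section

variable {G K : SimpleGraph V} {M : Set (Sym2 V)}

theorem isPM_edgeSet_iff : IsPM G K.edgeSet ↔ K ≤ G ∧ (⊤ : K.Subgraph).IsPerfectMatching := by
  simp only [IsPM, edgeSet_subset_edgeSet, Subgraph.isPerfectMatching_iff, Subgraph.top_adj,
    existsUnique_mem_edgeSet_iff]

theorem IsPM.edgeSet_fromEdgeSet (hM : IsPM G M) : (fromEdgeSet M).edgeSet = M := by
  rw [SimpleGraph.edgeSet_fromEdgeSet, sdiff_eq_left, Set.disjoint_left]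
  exact fun e he => G.not_isDiag_of_mem_edgeSet (hM.1 he)

theorem IsPM.fromEdgeSet (hM : IsPM G M) :
    fromEdgeSet M ≤ G ∧ (⊤ : (fromEdgeSet M).Subgraph).IsPerfectMatching := by
  rw [← isPM_edgeSet_iff, hM.edgeSet_fromEdgeSet]
  exact hM

theorem IsPM.mono {G' : SimpleGraph V} (h : G ≤ G') (hM : IsPM G M) : IsPM G' M :=
  ⟨hM.1.trans (edgeSet_mono h), hM.2⟩

theorem IsPM.deleteEdges {S : Set (Sym2 V)} (hM : IsPM G M) (hS : Disjoint S M) :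
    IsPM (G.deleteEdges S) M :=
  ⟨fun _ he => (edgeSet_deleteEdges S).superset ⟨hM.1 he, hS.notMem_of_mem_right he⟩, hM.2⟩

end

theorem IsAltCycle.isAlternating {G : SimpleGraph V} {M : Set (Sym2 V)} {u : V}
    {c : G.Walk u u} (hc : IsAltCycle G M c) :
    c.toSubgraph.spanningCoe.IsAlternating (fromEdgeSet M) := by
  intro v w w' hww' hw hw'
  simp only [Subgraph.spanningCoe_adj, Walk.adj_toSubgraph_iff_mem_edges] at hw hw'
  have hv : v ∈ c.support := c.fst_mem_support_of_mem_edges hw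
  obtain ⟨e, ⟨hec, heM, hve⟩, huniq⟩ := hc.2 v hv
  have hvw : v ≠ w := (c.edges_subset_edgeSet hw).ne
  have hvw' : v ≠ w' := (c.edges_subset_edgeSet hw').ne
  simp only [fromEdgeSet_adj, hvw, hvw', Ne, not_false_eq_true, and_true]
  constructor
  · intro hwM hw'M
    exact hww' (Sym2.congr_right.mp ((huniq _ ⟨hw, hwM, Sym2.mem_mk_left _ _⟩).trans
      (huniq _ ⟨hw', hw'M, Sym2.mem_mk_left _ _⟩).symm))
  · intro hw'M
    by_contra hwM
    -- otherwise the `M`-edge of `c` at `v` would be a third edge of `c` at `v`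
    obtain ⟨z, rfl⟩ := Sym2.mem_iff_exists.mp hve
    have hzw : z ≠ w := by rintro rfl; exact hwM heM
    have hzw' : z ≠ w' := by rintro rfl; exact hw'M heM
    have hthree : 2 < (c.toSubgraph.neighborSet v).ncard :=
      (Set.two_lt_ncard_iff c.finite_neighborSet_toSubgraph).mpr ⟨z, w, w',
        Walk.adj_toSubgraph_iff_mem_edges.mpr hec, Walk.adj_toSubgraph_iff_mem_edges.mpr hw,
        Walk.adj_toSubgraph_iff_mem_edges.mpr hw', hzw, hzw', hww'⟩
    exact hthree.ne' (hc.1.ncard_neighborSet_toSubgraph_eq_two hv)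

open scoped symmDiff in
theorem IsAltCycle.exists_isPM_ne {G H : SimpleGraph V} {M : Set (Sym2 V)} {u : V}
    {c : G.Walk u u} (hc : IsAltCycle G M c) (hM : IsPM H M)
    (hcH : ∀ e ∈ c.edges, e ∈ H.edgeSet) : ∃ M', IsPM H M' ∧ M' ≠ M := by
  obtain ⟨hMH, hMpm⟩ := hM.fromEdgeSet
  set C := c.toSubgraph.spanningCoe
  have hCH : C ≤ H := fun a b hab => hcH _ (Walk.adj_toSubgraph_iff_mem_edges.mp hab)
  refine ⟨(fromEdgeSet M ∆ C).edgeSet, isPM_edgeSet_iff.mpr ⟨?_, ?_⟩, fun hK => ?_⟩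
  · exact symmDiff_le_sup.trans (sup_le hMH hCH)
  · exact hMpm.symmDiff_of_isAlternating hc.isAlternating hc.1.isCycles_spanningCoe_toSubgraph
  · have hC : C = ⊥ :=
      symmDiff_eq_left.mp (edgeSet_injective (hK.trans hM.edgeSet_fromEdgeSet.symm))
    have hadj : C.Adj u c.snd := c.toSubgraph_adj_snd hc.1.not_nil
    rw [hC] at hadj
    exact hadj

theorem SimpleGraph.IsCycles.exists_adj_of_isAlternating {D A : SimpleGraph V} {w y : V}
    (hD : D.IsCycles) (halt : D.IsAlternating A) (hwy : D.Adj w y) :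
    ∃ x, D.Adj w x ∧ A.Adj w x := by
  obtain ⟨y', hyy', hwy'⟩ := hD.other_adj_of_adj hwy
  by_cases hA : A.Adj w y
  · exact ⟨y, hwy, hA⟩
  · exact ⟨y', hwy', not_not.mp (mt (halt hyy' hwy hwy').mpr hA)⟩

theorem SimpleGraph.Walk.IsCycle.isAltCycle_mapLe [Finite V] {G D : SimpleGraph V}
    {M : Set (Sym2 V)} {u : V} {p : D.Walk u u} (hp : p.IsCycle) (hD : D.IsCycles)
    (halt : D.IsAlternating (fromEdgeSet M)) (hM : IsPM G M) (hDG : D ≤ G) :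
    IsAltCycle G M (p.mapLe hDG) := by
  classical
  have := Fintype.ofFinite V
  refine ⟨hp.mapLe hDG, fun v hv => ?_⟩
  rw [Walk.support_mapLe_eq_support] at hv
  rw [Walk.edges_mapLe_eq_edges]
  obtain ⟨y, hvy⟩ : (p.toSubgraph.neighborSet v).Nonempty := Set.nonempty_of_ncard_ne_zero
    (by rw [hp.ncard_neighborSet_toSubgraph_eq_two hv]; exact two_ne_zero)
  obtain ⟨x, hvx, hMvx⟩ := hD.exists_adj_of_isAlternating halt hvy.adj_sub
  have hpvx : s(v, x) ∈ p.edges := Walk.adj_toSubgraph_iff_mem_edges.mp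
    ((hp.adj_toSubgraph_iff_of_isCycles hD ((Walk.mem_verts_toSubgraph p).mpr hv) x).mpr hvx)
  obtain ⟨e', -, he'⟩ := hM.2 v
  refine ⟨s(v, x), ⟨hpvx, hMvx.1, Sym2.mem_mk_left _ _⟩, fun e ⟨_, heM, hve⟩ => ?_⟩
  exact (he' e ⟨heM, hve⟩).trans (he' _ ⟨hMvx.1, Sym2.mem_mk_left _ _⟩).symm

open scoped symmDiff in
theorem exists_isAltCycle_of_ne [Finite V] {G : SimpleGraph V} {M Q : Set (Sym2 V)}
    (hM : IsPM G M) (hQ : IsPM G Q) (hne : M ≠ Q) :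
    ∃ (u : V) (c : G.Walk u u), IsAltCycle G M c ∧ ∀ e ∈ c.edges, e ∈ M ∨ e ∈ Q := by
  obtain ⟨hMG, hMpm⟩ := hM.fromEdgeSet
  obtain ⟨hQG, hQpm⟩ := hQ.fromEdgeSet
  set D := fromEdgeSet M ∆ fromEdgeSet Q
  have hDsup : D ≤ fromEdgeSet M ⊔ fromEdgeSet Q := symmDiff_le_sup
  have hDcyc : D.IsCycles := hMpm.symmDiff_isCycles hQpm
  obtain ⟨u, w, huw⟩ : ∃ u w, D.Adj u w := by
    rw [← ne_bot_iff_exists_adj, Ne, symmDiff_eq_bot, ← edgeSet_inj, hM.edgeSet_fromEdgeSet,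
      hQ.edgeSet_fromEdgeSet]
    exact hne
  obtain ⟨p, hp, -⟩ := hDcyc.exists_cycle_toSubgraph_verts_eq_connectedComponentSupp
    (c := D.connectedComponentMk u) rfl ⟨w, huw⟩
  refine ⟨u, p.mapLe (hDsup.trans (sup_le hMG hQG)),
    hp.isAltCycle_mapLe hDcyc (hMpm.isAlternating_symmDiff_left hQpm) hM _, fun e he => ?_⟩
  rw [Walk.edges_mapLe_eq_edges] at he
  have he' := edgeSet_mono hDsup (p.edges_subset_edgeSet he)
  rwa [edgeSet_sup, hM.edgeSet_fromEdgeSet, hQ.edgeSet_fromEdgeSet] at he'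

theorem stmt1 [Fintype V] (G : SimpleGraph V) (M S : Set (Sym2 V))
    (hM : IsPM G M) (hS : S ⊆ G.edgeSet \ M) :
    IsAntiForcingSet G M S ↔
      ∀ (v : V) (c : G.Walk v v), IsAltCycle G M c → ∃ e ∈ S, e ∈ c.edges := by
  have hSM : Disjoint S M := Set.disjoint_left.mpr fun e he => (hS he).2
  have hMS : IsPM (G.deleteEdges S) M := hM.deleteEdges hSM
  constructor
  · rintro ⟨-, M₀, -, huniq⟩ v c hc
    by_contra! hcS
    obtain ⟨M', hM', hne⟩ := hc.exists_isPM_ne hMS fun e he =>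
      (edgeSet_deleteEdges S).superset ⟨c.edges_subset_edgeSet he, fun heS => hcS e heS he⟩
    exact hne ((huniq M' hM').trans (huniq M hMS).symm)
  · intro hcyc
    refine ⟨hS, M, hMS, fun Q hQ => by_contra fun hne => ?_⟩
    obtain ⟨u, c, hc, hcMQ⟩ :=
      exists_isAltCycle_of_ne hM (hQ.mono (G.deleteEdges_le S)) (Ne.symm hne)
    obtain ⟨e, heS, hec⟩ := hcyc u c hc
    rcases hcMQ e hec with heM | heQ
    · exact hSM.notMem_of_mem_left heS heM
    · exact ((edgeSet_deleteEdges S).subset (hQ.1 heQ)).2 heS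
end

section
/- Let G be a graph with a perfect matching and let S be a minimum global forcing set of G. Then there exists F ⊆ S such that G − (S\F) has a unique perfect matching. -/
open SimpleGraph

variable {V : Type*}

theorem stmt5 [Fintype V] (G : SimpleGraph V) (hG : HasPM G) (S : Set (Sym2 V))
    (hS : IsGFS G S) (hmin : S.ncard = gf G) :
    ∃ F ⊆ S, ∃! M, IsPM (G.deleteEdges (S \ F)) M := by
  classical
  obtain ⟨M0, hM0⟩ := hG
  have hne : {k | ∃ M, IsPM G M ∧ (M ∩ S).ncard = k}.Nonempty := ⟨_, M0, hM0, rfl⟩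
  obtain ⟨M, hM, hcard⟩ := Nat.sInf_mem hne
  refine ⟨M ∩ S, Set.inter_subset_right, M, ?_, ?_⟩
  · refine ⟨fun e he => ?_, hM.2⟩
    rw [SimpleGraph.edgeSet_deleteEdges]
    exact ⟨hM.1 he, fun h => h.2 ⟨he, h.1⟩⟩
  · intro M' hM'
    have hsub' : M' ⊆ G.edgeSet \ (S \ (M ∩ S)) := by
      rw [← SimpleGraph.edgeSet_deleteEdges]; exact hM'.1
    have hM'G : IsPM G M' := ⟨fun e he => (hsub' he).1, hM'.2⟩
    have hsub : M' ∩ S ⊆ M ∩ S := by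
      rintro e ⟨heM', heS⟩
      have := (hsub' heM').2
      by_contra h
      exact this ⟨heS, fun h' => h h'⟩
    have hle : (M ∩ S).ncard ≤ (M' ∩ S).ncard := by
      rw [hcard]; exact Nat.sInf_le ⟨M', hM'G, rfl⟩
    have heq : M' ∩ S = M ∩ S :=
      Set.eq_of_subset_of_ncard_le hsub hle (Set.toFinite _)
    exact hS.2 M' M hM'G hM heq
end

section
/- Let G be a graph with a perfect matching and let uv be a pendant edge of G (u has degree 1). Then an edge subset S ⊆ E(G−{u,v}) is a minimum global forcing set of G if and only if it is a minimum global forcing set of G−{u,v}. -/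
open SimpleGraph

variable {V : Type*}

/-- `M` is a perfect matching of the subgraph of `G` induced on the vertex set `A`. -/
def IsPMOn (G : SimpleGraph V) (A : Set V) (M : Set (Sym2 V)) : Prop :=
  M ⊆ G.edgeSet ∧ (∀ e ∈ M, ∀ v, v ∈ e → v ∈ A) ∧ ∀ v ∈ A, ∃! e, e ∈ M ∧ v ∈ e

/-- `S` is a global forcing set of the subgraph of `G` induced on the vertex set `A`. -/
def IsGFSOn (G : SimpleGraph V) (A : Set V) (S : Set (Sym2 V)) : Prop :=
  S ⊆ {e ∈ G.edgeSet | ∀ v, v ∈ e → v ∈ A} ∧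
    ∀ M M', IsPMOn G A M → IsPMOn G A M' → M ∩ S = M' ∩ S → M = M'

/-- Global forcing number of the subgraph of `G` induced on `A`. -/
noncomputable def gfOn (G : SimpleGraph V) (A : Set V) : ℕ :=
  sInf {k | ∃ S, IsGFSOn G A S ∧ S.ncard = k}

section Aux

variable [Fintype V] {G : SimpleGraph V} [DecidableRel G.Adj] {u v : V}

lemma aux_union_cancel {α : Type*} {M M' : Set α} {a : α}
    (h : M ∪ {a} = M' ∪ {a}) (h1 : a ∉ M) (h2 : a ∉ M') : M = M' := by
  ext e
  constructor
  · intro he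
    have : e ∈ M' ∪ {a} := h ▸ Or.inl he
    rcases this with h' | h'
    · exact h'
    · exact absurd (h' ▸ he) h1
  · intro he
    have : e ∈ M ∪ {a} := h ▸ Or.inl he
    rcases this with h' | h'
    · exact h'
    · exact absurd (h' ▸ he) h2

lemma aux_diff_cancel {α : Type*} {M M' : Set α} {a : α}
    (h : M \ {a} = M' \ {a}) (h1 : a ∈ M) (h2 : a ∈ M') : M = M' := by
  ext e
  constructor
  · intro he
    by_cases hea : e = a
    · exact hea ▸ h2
    · exact ((h ▸ ⟨he, hea⟩ : e ∈ M' \ {a})).1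
  · intro he
    by_cases hea : e = a
    · exact hea ▸ h1
    · exact ((h.symm ▸ ⟨he, hea⟩ : e ∈ M \ {a})).1

lemma edge_at_u (huv : G.Adj u v) (hdeg : G.degree u = 1)
    {e : Sym2 V} (he : e ∈ G.edgeSet) (hu : u ∈ e) : e = s(u, v) := by
  have hnb : ∀ w, G.Adj u w → w = v := by
    intro w hw
    have h1 : v ∈ G.neighborFinset u := by simpa using huv
    have h2 : w ∈ G.neighborFinset u := by simpa using hw
    have hc : (G.neighborFinset u).card = 1 := hdeg
    obtain ⟨a, ha⟩ := Finset.card_eq_one.mp hc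
    rw [ha, Finset.mem_singleton] at h1 h2
    rw [h2, ← h1]
  induction e with
  | _ a b =>
    rw [SimpleGraph.mem_edgeSet] at he
    rw [Sym2.mem_iff] at hu
    rcases hu with rfl | rfl
    · rw [hnb b he]
    · rw [hnb a he.symm, Sym2.eq_swap]

lemma pm_e0_mem (huv : G.Adj u v) (hdeg : G.degree u = 1)
    {M : Set (Sym2 V)} (hM : IsPM G M) : s(u, v) ∈ M := by
  obtain ⟨e, ⟨heM, heu⟩, -⟩ := hM.2 u
  rwa [edge_at_u huv hdeg (hM.1 heM) heu] at heM

lemma pm_touch (huv : G.Adj u v) (hdeg : G.degree u = 1)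
    {M : Set (Sym2 V)} (hM : IsPM G M) {e : Sym2 V} (heM : e ∈ M)
    (h : u ∈ e ∨ v ∈ e) : e = s(u, v) := by
  rcases h with h | h
  · exact edge_at_u huv hdeg (hM.1 heM) h
  · obtain ⟨f, -, hun⟩ := hM.2 v
    rw [hun e ⟨heM, h⟩, hun s(u, v) ⟨pm_e0_mem huv hdeg hM, by simp⟩]

lemma pm_restrict (huv : G.Adj u v) (hdeg : G.degree u = 1)
    {M : Set (Sym2 V)} (hM : IsPM G M) :
    IsPMOn G ({u, v} : Set V)ᶜ (M \ {s(u, v)}) := by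
  refine ⟨fun e he => hM.1 he.1, ?_, ?_⟩
  · rintro e ⟨heM, hene⟩ w hw hwuv
    apply hene
    apply pm_touch huv hdeg hM heM
    rcases hwuv with rfl | rfl
    · exact Or.inl hw
    · exact Or.inr hw
  · intro w hw
    obtain ⟨e, ⟨heM, hwe⟩, hun⟩ := hM.2 w
    have hene : e ∉ ({s(u, v)} : Set (Sym2 V)) := by
      intro h
      rw [Set.mem_singleton_iff] at h
      subst h
      rw [Sym2.mem_iff] at hwe
      rcases hwe with rfl | rfl
      · exact hw (Or.inl rfl)
      · exact hw (Or.inr rfl)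
    exact ⟨e, ⟨⟨heM, hene⟩, hwe⟩, fun e' he' => hun e' ⟨he'.1.1, he'.2⟩⟩

lemma pmOn_e0_not_mem {M : Set (Sym2 V)}
    (hM : IsPMOn G ({u, v} : Set V)ᶜ M) : s(u, v) ∉ M := by
  intro h
  exact hM.2.1 _ h u (by simp) (Or.inl rfl)

lemma pm_extend (huv : G.Adj u v) {M : Set (Sym2 V)}
    (hM : IsPMOn G ({u, v} : Set V)ᶜ M) : IsPM G (M ∪ {s(u, v)}) := by
  constructor
  · rintro e (he | he)
    · exact hM.1 he
    · rw [Set.mem_singleton_iff] at he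
      subst he
      exact huv
  · intro w
    by_cases hw : w ∈ ({u, v} : Set V)
    · refine ⟨s(u, v), ⟨Or.inr rfl, ?_⟩, ?_⟩
      · rcases hw with rfl | rfl
        · exact Sym2.mem_mk_left _ _
        · exact Sym2.mem_mk_right _ _
      · rintro e ⟨(heM | heM), hwe⟩
        · exact absurd hw (hM.2.1 e heM w hwe)
        · exact heM
    · obtain ⟨e, ⟨heM, hwe⟩, hun⟩ := hM.2.2 w hw
      refine ⟨e, ⟨Or.inl heM, hwe⟩, ?_⟩
      rintro e' ⟨(he' | he'), hwe'⟩
      · exact hun e' ⟨he', hwe'⟩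
      · rw [Set.mem_singleton_iff] at he'
        subst he'
        rw [Sym2.mem_iff] at hwe'
        exact absurd (by rcases hwe' with rfl | rfl <;> simp) hw

lemma gfs_iff (huv : G.Adj u v) (hdeg : G.degree u = 1) {S : Set (Sym2 V)}
    (hS : S ⊆ {e ∈ G.edgeSet | ∀ w, w ∈ e → w ∉ ({u, v} : Set V)}) :
    IsGFS G S ↔ IsGFSOn G ({u, v} : Set V)ᶜ S := by
  have he0 : s(u, v) ∉ S := fun h => (hS h).2 u (Sym2.mem_mk_left _ _) (Or.inl rfl)
  have hsing : ∀ T : Set (Sym2 V), ({s(u, v)} : Set (Sym2 V)) ∩ S = ∅ := by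
    intro _
    ext e
    simp only [Set.mem_inter_iff, Set.mem_singleton_iff, Set.mem_empty_iff_false, iff_false,
      not_and]
    rintro rfl
    exact he0
  constructor
  · rintro ⟨-, hforce⟩
    refine ⟨fun e he => ⟨(hS he).1, fun w hw => (hS he).2 w hw⟩, ?_⟩
    intro M M' hM hM' hagree
    have h1 : M ∪ {s(u, v)} = M' ∪ {s(u, v)} := by
      apply hforce _ _ (pm_extend huv hM) (pm_extend huv hM')
      rw [Set.union_inter_distrib_right, Set.union_inter_distrib_right, hagree, hsing S]
    exact aux_union_cancel h1 (pmOn_e0_not_mem hM) (pmOn_e0_not_mem hM')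
  · rintro ⟨-, hforce⟩
    refine ⟨fun e he => (hS he).1, ?_⟩
    intro M M' hM hM' hagree
    have hdiff : ∀ N : Set (Sym2 V), (N \ {s(u, v)}) ∩ S = N ∩ S := by
      intro N
      ext e
      simp only [Set.mem_inter_iff, Set.mem_diff, Set.mem_singleton_iff, and_assoc]
      constructor
      · rintro ⟨h1, -, h3⟩; exact ⟨h1, h3⟩
      · rintro ⟨h1, h3⟩
        exact ⟨h1, fun h => he0 (h ▸ h3), h3⟩
    have h1 : M \ {s(u, v)} = M' \ {s(u, v)} := by
      apply hforce _ _ (pm_restrict huv hdeg hM) (pm_restrict huv hdeg hM')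
      rw [hdiff, hdiff, hagree]
    exact aux_diff_cancel h1 (pm_e0_mem huv hdeg hM) (pm_e0_mem huv hdeg hM')

lemma gf_eq (huv : G.Adj u v) (hdeg : G.degree u = 1) :
    gf G = gfOn G ({u, v} : Set V)ᶜ := by
  classical
  set A := ({u, v} : Set V)ᶜ
  have hneG : {k | ∃ S, IsGFS G S ∧ S.ncard = k}.Nonempty := by
    refine ⟨G.edgeSet.ncard, G.edgeSet, ⟨subset_rfl, ?_⟩, rfl⟩
    intro M M' hM hM' h
    rw [← Set.inter_eq_left.mpr hM.1, ← Set.inter_eq_left.mpr hM'.1, h]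
  have hneOn : {k | ∃ S, IsGFSOn G A S ∧ S.ncard = k}.Nonempty := by
    refine ⟨_, {e ∈ G.edgeSet | ∀ w, w ∈ e → w ∈ A}, ⟨subset_rfl, ?_⟩, rfl⟩
    intro M M' hM hM' h
    have hsub : ∀ N : Set (Sym2 V), IsPMOn G A N →
        N ⊆ {e ∈ G.edgeSet | ∀ w, w ∈ e → w ∈ A} :=
      fun N hN e he => ⟨hN.1 he, fun w hw => hN.2.1 e he w hw⟩
    rw [← Set.inter_eq_left.mpr (hsub M hM), ← Set.inter_eq_left.mpr (hsub M' hM'), h]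
  apply le_antisymm
  · obtain ⟨S₀, hS₀, hcard⟩ := Nat.sInf_mem hneOn
    have hS₀' : S₀ ⊆ {e ∈ G.edgeSet | ∀ w, w ∈ e → w ∉ ({u, v} : Set V)} :=
      fun e he => ⟨(hS₀.1 he).1, fun w hw => (hS₀.1 he).2 w hw⟩
    exact Nat.sInf_le ⟨S₀, (gfs_iff huv hdeg hS₀').mpr hS₀, hcard⟩
  · obtain ⟨S₁, hS₁, hcard⟩ := Nat.sInf_mem hneG
    set S₂ : Set (Sym2 V) := {e ∈ S₁ | ∀ w, w ∈ e → w ∉ ({u, v} : Set V)} with hS₂def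
    have hkey : ∀ N : Set (Sym2 V), IsPMOn G A N → N ∩ S₁ = N ∩ S₂ := by
      intro N hN
      ext e
      simp only [hS₂def, Set.mem_inter_iff, Set.mem_setOf_eq]
      constructor
      · rintro ⟨h1, h2⟩
        exact ⟨h1, h2, fun w hw => hN.2.1 e h1 w hw⟩
      · rintro ⟨h1, h2, -⟩
        exact ⟨h1, h2⟩
    have he0S₂ : s(u, v) ∉ S₂ := fun h => h.2 u (Sym2.mem_mk_left _ _) (Or.inl rfl)
    have hGFSOn : IsGFSOn G A S₂ := by
      refine ⟨fun e he => ⟨hS₁.1 he.1, fun w hw => he.2 w hw⟩, ?_⟩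
      intro M M' hM hM' hagree
      have h1 : M ∪ {s(u, v)} = M' ∪ {s(u, v)} := by
        apply hS₁.2 _ _ (pm_extend huv hM) (pm_extend huv hM')
        rw [Set.union_inter_distrib_right, Set.union_inter_distrib_right,
          hkey M hM, hkey M' hM', hagree]
      exact aux_union_cancel h1 (pmOn_e0_not_mem hM) (pmOn_e0_not_mem hM')
    calc gfOn G A ≤ S₂.ncard := Nat.sInf_le ⟨S₂, hGFSOn, rfl⟩
      _ ≤ S₁.ncard := Set.ncard_le_ncard (Set.sep_subset _ _) (Set.toFinite _)
      _ = gf G := hcard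

end Aux

theorem stmt6 [Fintype V] (G : SimpleGraph V) [DecidableRel G.Adj] (hG : HasPM G)
    (u v : V) (huv : G.Adj u v) (hdeg : G.degree u = 1) (S : Set (Sym2 V))
    (hS : S ⊆ {e ∈ G.edgeSet | ∀ w, w ∈ e → w ∉ ({u, v} : Set V)}) :
    (IsGFS G S ∧ S.ncard = gf G) ↔
      (IsGFSOn G ({u, v} : Set V)ᶜ S ∧ S.ncard = gfOn G ({u, v} : Set V)ᶜ) := by
  rw [gfs_iff huv hdeg hS, gf_eq huv hdeg]
end

section
/- If G is a bipartite graph with a unique perfect matching and 2n vertices, then e(G) ≤ n(n+1)/2, and moreover G has at least one pendant vertex (a vertex of degree 1). -/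
open SimpleGraph

variable {V : Type*}

lemma fin2_trans {a b c : Fin 2} (h1 : a ≠ b) (h2 : b ≠ c) : a = c := by
  fin_cases a <;> fin_cases b <;> fin_cases c <;> simp_all

lemma pm_fun (G : SimpleGraph V) (M : Set (Sym2 V)) (hM : IsPM G M) :
    ∃ m : V → V, (∀ v, G.Adj v (m v)) ∧ (∀ v, s(v, m v) ∈ M) ∧
      (∀ v e, e ∈ M → v ∈ e → e = s(v, m v)) := by
  have h := fun v => (hM.2 v).exists
  choose e he hve using h
  refine ⟨fun v => Sym2.Mem.other (hve v), fun v => ?_, fun v => ?_, fun v f hf hvf => ?_⟩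
  · have h2 : s(v, Sym2.Mem.other (hve v)) ∈ G.edgeSet := by
      rw [Sym2.other_spec (hve v)]; exact hM.1 (he v)
    exact (SimpleGraph.mem_edgeSet G).mp h2
  · exact (Sym2.other_spec (hve v)) ▸ he v
  · rcases hM.2 v with ⟨e', _, hu⟩
    have h1 := hu f ⟨hf, hvf⟩
    have h2 := hu (e v) ⟨he v, hve v⟩
    rw [h1, ← h2, Sym2.other_spec (hve v)]

lemma pm_involutive (G : SimpleGraph V) (M : Set (Sym2 V)) (m : V → V)
    (hadj : ∀ v, G.Adj v (m v)) (hmem : ∀ v, s(v, m v) ∈ M)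
    (huni : ∀ v e, e ∈ M → v ∈ e → e = s(v, m v)) : ∀ v, m (m v) = v := by
  intro v
  have h := huni (m v) s(v, m v) (hmem v) (Sym2.mem_mk_right v (m v))
  rw [Sym2.eq_swap] at h
  exact ((Sym2.congr_right).mp h).symm

lemma pm_eq_of_subset (G : SimpleGraph V) (M₁ M₂ : Set (Sym2 V))
    (h1 : IsPM G M₁) (h2 : IsPM G M₂) (hsub : M₁ ⊆ M₂) : M₁ = M₂ := by
  refine Set.Subset.antisymm hsub (fun e he => ?_)
  induction e with
  | _ a b =>
    rcases (h1.2 a).exists with ⟨f, hf, haf⟩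
    rcases h2.2 a with ⟨f', _, hu⟩
    have e1 : f = f' := hu f ⟨hsub hf, haf⟩
    have e2 : s(a, b) = f' := hu s(a,b) ⟨he, Sym2.mem_mk_left a b⟩
    rw [e2, ← e1]; exact hf

lemma pendant_lemma [Fintype V] (G : SimpleGraph V) [DecidableRel G.Adj]
    (hne : Nonempty V) (hbip : G.Colorable 2) (huniq : ∃! M, IsPM G M) :
    ∃ v : V, G.degree v = 1 := by
  classical
  by_contra hno
  push_neg at hno
  obtain ⟨M, hM, hMu⟩ := huniq
  obtain ⟨m, hmadj, hmM, hmu⟩ := pm_fun G M hM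
  have hminv := pm_involutive G M m hmadj hmM hmu
  have hminj : Function.Injective m := Function.LeftInverse.injective hminv
  have hdeg : ∀ v, 1 < G.degree v := by
    intro v
    have h1 : m v ∈ G.neighborFinset v := by
      rw [SimpleGraph.mem_neighborFinset]; exact hmadj v
    have h0 : 0 < G.degree v := Finset.card_pos.mpr ⟨m v, h1⟩
    have := hno v
    omega
  have hn : ∀ v, ∃ w, G.Adj v w ∧ w ≠ m v := by
    intro v
    obtain ⟨w, hw, hne'⟩ := Finset.exists_mem_ne (hdeg v) (m v)
    exact ⟨w, (SimpleGraph.mem_neighborFinset G v w).mp hw, hne'⟩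
  choose nb hnb hnbne using hn
  set g : V → V := fun v => m (nb v) with hg
  -- coloring
  obtain ⟨c⟩ := hbip
  have hgc : ∀ v, c (g v) = c v := fun v =>
    fin2_trans (c.valid (hmadj (nb v))).symm (c.valid (hnb v)).symm
  -- periodic point
  obtain ⟨i, j, hij, hfe⟩ := Finite.exists_ne_map_eq_of_infinite (fun i : ℕ => g^[i] (Classical.arbitrary V))
  wlog hlt : i < j generalizing i j
  · exact this j i hij.symm hfe.symm (by omega)
  set y : V := g^[i] (Classical.arbitrary V) with hy
  set p : ℕ := j - i with hp
  have hppos : 0 < p := by omega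
  have hper : g^[p] y = y := by
    have : g^[p + i] (Classical.arbitrary V) = g^[i] (Classical.arbitrary V) := by
      have : p + i = j := by omega
      rw [this]; exact hfe.symm
    rw [Function.iterate_add_apply] at this
    exact this
  set C : Set V := {x | ∃ k, g^[k] y = x} with hC
  have hyC : y ∈ C := ⟨0, rfl⟩
  have hgC : ∀ x ∈ C, g x ∈ C := by
    rintro x ⟨k, rfl⟩
    exact ⟨k + 1, Function.iterate_succ_apply' g k y⟩
  have hCper : ∀ x ∈ C, g^[p] x = x := by
    rintro x ⟨k, rfl⟩
    rw [← Function.iterate_add_apply, Nat.add_comm, Function.iterate_add_apply, hper]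
  obtain ⟨q, hq⟩ : ∃ q, p = q + 1 := ⟨p - 1, by omega⟩
  have hq1 : p - 1 = q := by omega
  have hCp1 : ∀ x ∈ C, g^[p-1] x ∈ C ∧ g (g^[p-1] x) = x := by
    rintro x hx
    obtain ⟨k, rfl⟩ := hx
    rw [hq1]
    refine ⟨⟨q + k, by rw [Function.iterate_add_apply]⟩, ?_⟩
    rw [← Function.iterate_succ_apply' g q, Nat.succ_eq_add_one, ← hq, hCper _ ⟨k, rfl⟩]
  have hg1 : ∀ x ∈ C, g^[p-1] (g x) = x := by
    intro x hx
    rw [hq1, ← Function.iterate_succ_apply g q, Nat.succ_eq_add_one, ← hq, hCper x hx]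
  have hCc : ∀ x ∈ C, c x = c y := by
    rintro x ⟨k, rfl⟩
    induction k with
    | zero => rfl
    | succ k ih =>
      rw [Function.iterate_succ_apply', hgc]; exact ih
  have hmC : ∀ x ∈ C, m x ∉ C := by
    intro x hx hmx
    have := c.valid (hmadj x)
    rw [hCc x hx, hCc (m x) hmx] at this
    exact this rfl
  have hnbC : ∀ x ∈ C, nb x ∉ C := by
    intro x hx hnx
    have := c.valid (hnb x)
    rw [hCc x hx, hCc (nb x) hnx] at this
    exact this rfl
  -- the new matching function
  set m' : V → V := fun v => if v ∈ C then nb v else if m v ∈ C then g^[p-1] (m v) else m v with hm'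
  have hm'C : ∀ v ∈ C, m' v = nb v := by
    intro v hv; simp only [hm']; rw [if_pos hv]
  have hm'nb : ∀ v ∈ C, m' (nb v) = v := by
    intro v hv
    have h1 : nb v ∉ C := hnbC v hv
    have h2 : m (nb v) ∈ C := hgC v hv
    simp only [hm']
    rw [if_neg h1, if_pos h2]
    exact hg1 v hv
  have hm'2 : ∀ v, v ∉ C → m v ∈ C → m' v = g^[p-1] (m v) := by
    intro v h1 h2; simp only [hm']; rw [if_neg h1, if_pos h2]
  have hm'3 : ∀ v, v ∉ C → m v ∉ C → m' v = m v := by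
    intro v h1 h2; simp only [hm']; rw [if_neg h1, if_neg h2]
  have hnb_inv : ∀ v, v ∉ C → m v ∈ C → nb (g^[p-1] (m v)) = v := by
    intro v h1 h2
    have hz : g^[p-1] (m v) ∈ C := (hCp1 (m v) h2).1
    have : g (g^[p-1] (m v)) = m v := (hCp1 (m v) h2).2
    have : m (nb (g^[p-1] (m v))) = m v := this
    exact hminj this
  have hadj' : ∀ v, G.Adj v (m' v) := by
    intro v
    by_cases h1 : v ∈ C
    · rw [hm'C v h1]; exact hnb v
    by_cases h2 : m v ∈ C
    · rw [hm'2 v h1 h2]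
      have := hnb (g^[p-1] (m v))
      rw [hnb_inv v h1 h2] at this
      exact this.symm
    · rw [hm'3 v h1 h2]; exact hmadj v
  have hinv' : ∀ v, m' (m' v) = v := by
    intro v
    by_cases h1 : v ∈ C
    · rw [hm'C v h1]; exact hm'nb v h1
    by_cases h2 : m v ∈ C
    · rw [hm'2 v h1 h2]
      have hz : g^[p-1] (m v) ∈ C := (hCp1 (m v) h2).1
      rw [hm'C _ hz, hnb_inv v h1 h2]
    · rw [hm'3 v h1 h2]
      have h3 : m v ∉ C := h2
      have h4 : m (m v) ∉ C := by rw [hminv]; exact h1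
      rw [hm'3 (m v) h3 h4, hminv]
  -- the new PM
  set M' : Set (Sym2 V) := {e | ∃ v, e = s(v, m' v)} with hM'
  have hM'pm : IsPM G M' := by
    constructor
    · rintro e ⟨v, rfl⟩
      exact (SimpleGraph.mem_edgeSet G).mpr (hadj' v)
    · intro v
      refine ⟨s(v, m' v), ⟨⟨v, rfl⟩, Sym2.mem_mk_left v _⟩, ?_⟩
      rintro e ⟨⟨w, rfl⟩, hv⟩
      rcases Sym2.mem_iff.mp hv with h | h
      · rw [h]
      · subst h
        rw [hinv' w, Sym2.eq_swap]
  have := hMu M' hM'pm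
  -- contradiction
  have h1 : s(y, nb y) ∈ M' := ⟨y, by rw [hm'C y hyC]⟩
  rw [this] at h1
  have h2 := hmu y s(y, nb y) h1 (Sym2.mem_mk_left y _)
  exact hnbne y (Sym2.congr_right.mp h2)

universe u

lemma edge_bound_aux (n : ℕ) : ∀ (W : Type u) [Fintype W] (G : SimpleGraph W),
    Fintype.card W = 2 * n → G.Colorable 2 → (∃! M, IsPM G M) →
    G.edgeSet.ncard ≤ n * (n + 1) / 2 := by
  induction n with
  | zero =>
    intro W _ G hcard _ _
    have hE : IsEmpty W := Fintype.card_eq_zero_iff.mp (by omega)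
    have : G.edgeSet = ∅ := by
      ext e
      induction e with
      | _ a b => exact (hE.false a).elim
    simp [this]
  | succ n ih =>
    intro W _ G hcard hbip huniq
    classical
    have hne : Nonempty W := Fintype.card_pos_iff.mp (by omega)
    obtain ⟨M, hM, hMu⟩ := huniq
    obtain ⟨m, hmadj, hmM, hmu⟩ := pm_fun G M hM
    have hminv := pm_involutive G M m hmadj hmM hmu
    have hminj : Function.Injective m := Function.LeftInverse.injective hminv
    obtain ⟨v, hv⟩ := pendant_lemma G hne hbip ⟨M, hM, hMu⟩
    set u : W := m v with hu
    have hadjvu : G.Adj v u := hmadj v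
    have hvu : v ≠ u := hadjvu.ne
    have hadj_v : ∀ w, G.Adj v w → w = u := by
      intro w hw
      have h1 : u ∈ G.neighborFinset v := by rw [mem_neighborFinset]; exact hadjvu
      have h2 : w ∈ G.neighborFinset v := by rw [mem_neighborFinset]; exact hw
      obtain ⟨a, ha⟩ := Finset.card_eq_one.mp hv
      rw [ha, Finset.mem_singleton] at h1 h2
      exact h2.trans h1.symm
    -- degree bound via coloring classes
    obtain ⟨c⟩ := hbip
    have hclass : ∀ z : W, (Finset.univ.filter (fun w => c w = c z)).card = 2 * n + 2 -
        (Finset.univ.filter (fun w => c w = c z)).card := by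
      intro z
      have hbij : (Finset.univ.filter (fun w => c w = c z)).card =
          (Finset.univ.filter (fun w => ¬ c w = c z)).card := by
        apply Finset.card_bij (fun w _ => m w)
        · intro a ha
          simp only [Finset.mem_filter, Finset.mem_univ, true_and] at ha ⊢
          rw [← ha]
          exact (c.valid (hmadj a)).symm
        · intro a _ b _ hab
          exact hminj hab
        · intro b hb
          simp only [Finset.mem_filter, Finset.mem_univ, true_and] at hb ⊢
          refine ⟨m b, ?_, hminv b⟩
          exact fin2_trans (c.valid (hmadj b)).symm hb
      have hsum := Finset.card_filter_add_card_filter_not (s := Finset.univ)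
        (fun w => c w = c z)
      rw [Finset.card_univ, hcard] at hsum
      omega
    have hdeg_le : ∀ z : W, G.degree z ≤ n + 1 := by
      intro z
      have hsub : G.neighborFinset z ⊆ Finset.univ.filter (fun w => ¬ c w = c z) := by
        intro w hw
        rw [mem_neighborFinset] at hw
        simp only [Finset.mem_filter, Finset.mem_univ, true_and]
        exact (c.valid hw.symm)
      have h1 := Finset.card_le_card hsub
      have hsum := Finset.card_filter_add_card_filter_not (s := Finset.univ)
        (fun w => c w = c z)
      rw [Finset.card_univ, hcard] at hsum
      have h2 := hclass z
      unfold SimpleGraph.degree at *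
      omega
    -- the induced subgraph on the complement of {v, u}
    set S : Set W := {w | w ≠ v ∧ w ≠ u} with hS
    have hmS : ∀ w ∈ S, m w ∈ S := by
      intro w hw
      constructor
      · intro h
        apply hw.2
        have : m (m w) = m v := by rw [h]
        rw [hminv w] at this
        rw [this]
      · intro h
        exact hw.1 (hminj (h.trans hu))
    set G' : SimpleGraph ↥S := G.induce S with hG'
    have hG'adj : ∀ a b : ↥S, G'.Adj a b ↔ G.Adj a.1 b.1 := fun a b => by
      simp [hG', comap_adj]
    have hmap_inj : Function.Injective (Sym2.map (Subtype.val : ↥S → W)) :=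
      Sym2.map.injective Subtype.val_injective
    have hmapE : ∀ e ∈ G'.edgeSet, Sym2.map (Subtype.val : ↥S → W) e ∈ G.edgeSet := by
      intro e he
      induction e with
      | _ a b =>
        rw [Sym2.map_pair_eq, mem_edgeSet]
        rw [mem_edgeSet, hG'adj] at he
        exact he
    have hmemS : ∀ (e : Sym2 ↥S) (w : W), w ∈ Sym2.map (Subtype.val : ↥S → W) e → w ∈ S := by
      intro e w hw
      obtain ⟨a, _, rfl⟩ := Sym2.mem_map.mp hw
      exact a.2
    set M0 : Set (Sym2 ↥S) := {e | Sym2.map (Subtype.val : ↥S → W) e ∈ M} with hM0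
    have hM0pm : IsPM G' M0 := by
      constructor
      · intro e he
        induction e with
        | _ a b =>
          rw [hM0, Set.mem_setOf_eq, Sym2.map_pair_eq] at he
          have := hM.1 he
          rw [mem_edgeSet] at this
          rw [mem_edgeSet, hG'adj]
          exact this
      · intro x
        refine ⟨s(x, ⟨m x.1, hmS x.1 x.2⟩), ⟨?_, Sym2.mem_mk_left _ _⟩, ?_⟩
        · rw [hM0, Set.mem_setOf_eq, Sym2.map_pair_eq]
          exact hmM x.1
        · rintro e ⟨heM, hxe⟩
          have h1 : (x : W) ∈ Sym2.map (Subtype.val : ↥S → W) e :=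
            Sym2.mem_map.mpr ⟨x, hxe, rfl⟩
          have h2 := hmu x.1 _ heM h1
          apply hmap_inj
          rw [h2, Sym2.map_pair_eq]
    have huniq' : ∀ N, IsPM G' N → N = M0 := by
      intro N hN
      set L : Set (Sym2 W) := (Sym2.map (Subtype.val : ↥S → W) '' N) ∪ {s(v, u)} with hL
      have hLpm : IsPM G L := by
        constructor
        · rintro e (⟨e', he', rfl⟩ | he)
          · exact hmapE e' (hN.1 he')
          · rw [Set.mem_singleton_iff.mp he, mem_edgeSet]; exact hadjvu
        · intro w
          by_cases hwS : w ∈ S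
          · obtain ⟨e', ⟨he'N, he'mem⟩, huni⟩ := hN.2 ⟨w, hwS⟩
            refine ⟨Sym2.map Subtype.val e', ⟨Or.inl ⟨e', he'N, rfl⟩,
              Sym2.mem_map.mpr ⟨⟨w, hwS⟩, he'mem, rfl⟩⟩, ?_⟩
            rintro f ⟨(⟨f', hf'N, rfl⟩ | hf), hwf⟩
            · obtain ⟨a, haf, hav⟩ := Sym2.mem_map.mp hwf
              have ha : a = ⟨w, hwS⟩ := Subtype.ext hav
              rw [huni f' ⟨hf'N, ha ▸ haf⟩]
            · exfalso
              rw [Set.mem_singleton_iff] at hf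
              rw [hf] at hwf
              rcases Sym2.mem_iff.mp hwf with h | h
              · exact hwS.1 h
              · exact hwS.2 h
          · have hw2 : w = v ∨ w = u := by
              by_contra hcon
              push_neg at hcon
              exact hwS ⟨hcon.1, hcon.2⟩
            refine ⟨s(v, u), ⟨Or.inr rfl, ?_⟩, ?_⟩
            · rcases hw2 with rfl | rfl
              · exact Sym2.mem_mk_left _ _
              · exact Sym2.mem_mk_right _ _
            · rintro f ⟨(⟨f', hf'N, rfl⟩ | hf), hwf⟩
              · exact absurd (hmemS f' w hwf) (by
                  rcases hw2 with rfl | rfl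
                  · exact fun h => h.1 rfl
                  · exact fun h => h.2 rfl)
              · exact Set.mem_singleton_iff.mp hf
      have hLM : L = M := hMu L hLpm
      have hsub : N ⊆ M0 := by
        intro e' he'
        rw [hM0, Set.mem_setOf_eq, ← hLM]
        exact Or.inl ⟨e', he', rfl⟩
      exact pm_eq_of_subset G' N M0 hN hM0pm hsub
    -- edge partition
    set A : Set (Sym2 W) := Sym2.map (Subtype.val : ↥S → W) '' G'.edgeSet with hA
    have hApart : G.edgeSet = A ∪ G.incidenceSet u := by
      ext e
      constructor
      · intro he
        by_cases hue : u ∈ e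
        · exact Or.inr ⟨he, hue⟩
        · left
          induction e with
          | _ a b =>
            rw [mem_edgeSet] at he
            have hau : a ≠ u := fun h => hue (h ▸ Sym2.mem_mk_left a b)
            have hbu : b ≠ u := fun h => hue (h ▸ Sym2.mem_mk_right a b)
            have hav : a ≠ v := by
              rintro rfl
              exact hbu (hadj_v b he)
            have hbv : b ≠ v := by
              rintro rfl
              exact hau (hadj_v a he.symm)
            refine ⟨s((⟨a, hav, hau⟩ : ↥S), (⟨b, hbv, hbu⟩ : ↥S)), ?_, Sym2.map_pair_eq _ _ _⟩
            rw [mem_edgeSet, hG'adj]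
            exact he
      · rintro (⟨e', he', rfl⟩ | he)
        · exact hmapE e' he'
        · exact he.1
    have hdisj : Disjoint A (G.incidenceSet u) := by
      rw [Set.disjoint_left]
      rintro e ⟨e', _, rfl⟩ he2
      exact (hmemS e' u he2.2).2 rfl
    have hAcard : A.ncard = G'.edgeSet.ncard := Set.ncard_image_of_injective _ hmap_inj
    have hInc : (G.incidenceSet u).ncard = G.degree u := by
      rw [← Nat.card_coe_set_eq, Nat.card_congr (G.incidenceSetEquivNeighborSet u),
        Nat.card_eq_fintype_card, card_neighborSet_eq_degree]
    -- apply the induction hypothesis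
    have hScard : Fintype.card ↥S = 2 * n := by
      have hSc : S = ({v, u} : Set W)ᶜ := by
        ext w
        simp only [hS, Set.mem_setOf_eq, Set.mem_compl_iff, Set.mem_insert_iff,
          Set.mem_singleton_iff]
        tauto
      have h1 := Set.ncard_add_ncard_compl ({v, u} : Set W) (Set.toFinite _) (Set.toFinite _)
      rw [Set.ncard_pair hvu, Nat.card_eq_fintype_card, hcard] at h1
      rw [← Nat.card_eq_fintype_card, Nat.card_coe_set_eq, hSc]
      omega
    have hbip' : G'.Colorable 2 :=
      ⟨⟨fun x => c x.1, fun {a b} hab => c.valid ((hG'adj a b).mp hab)⟩⟩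
    have hihb := ih ↥S G' hScard hbip' ⟨M0, hM0pm, huniq'⟩
    have hfinal : G.edgeSet.ncard = G'.edgeSet.ncard + G.degree u := by
      rw [hApart, Set.ncard_union_eq hdisj (Set.toFinite _) (Set.toFinite _), hAcard, hInc]
    have hdu := hdeg_le u
    have heven : ∃ k, n * (n + 1) = k + k := Nat.even_mul_succ_self n
    obtain ⟨k, hk⟩ := heven
    have hb2 : (n + 1) * (n + 1 + 1) = n * (n + 1) + 2 * (n + 1) := by ring
    omega

theorem stmt7 [Fintype V] (G : SimpleGraph V) [DecidableRel G.Adj] (n : ℕ) (hn : 1 ≤ n)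
    (hcard : Fintype.card V = 2 * n) (hbip : G.Colorable 2)
    (huniq : ∃! M, IsPM G M) :
    G.edgeSet.ncard ≤ n * (n + 1) / 2 ∧ ∃ v : V, G.degree v = 1 := by
  have hne : Nonempty V := Fintype.card_pos_iff.mp (by omega)
  exact ⟨edge_bound_aux n V G hcard hbip huniq, pendant_lemma G hne hbip huniq⟩
end

section
/- For the complete bipartite graph K_{n,n} with n ≥ 3, gf(K_{n,n}) = n² − 2n + 1 and gf(K_{n,n}) − Af(K_{n,n}) = (n−1)(n−2)/2. -/
open SimpleGraph

variable {V : Type*}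

namespace Stmt12aux
open Sum

variable {n : ℕ}

abbrev BG (n : ℕ) : SimpleGraph (Fin n ⊕ Fin n) := completeBipartiteGraph (Fin n) (Fin n)

def Mp (σ : Equiv.Perm (Fin n)) : Set (Sym2 (Fin n ⊕ Fin n)) :=
  {e | ∃ i, e = s(Sum.inl i, Sum.inr (σ i))}

lemma sym2_eq {i i' j j' : Fin n} :
    s(Sum.inl i, (Sum.inr j : Fin n ⊕ Fin n)) = s(Sum.inl i', Sum.inr j') ↔ i = i' ∧ j = j' := by
  constructor
  · intro h
    rw [Sym2.eq_iff] at h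
    rcases h with ⟨h1, h2⟩ | ⟨h1, h2⟩
    · exact ⟨Sum.inl.inj h1, Sum.inr.inj h2⟩
    · exact absurd h1 (by simp)
  · rintro ⟨rfl, rfl⟩; rfl

lemma mem_edgeSet_iff {e : Sym2 (Fin n ⊕ Fin n)} :
    e ∈ (BG n).edgeSet ↔ ∃ i j, e = s(Sum.inl i, Sum.inr j) := by
  induction e using Sym2.ind with
  | _ u v =>
    cases u with
    | inl i => cases v with
      | inl i' => simp [Sym2.eq_iff]
      | inr j => simp only [mem_edgeSet]; simp [Sym2.eq_iff]
    | inr j => cases v with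
      | inl i => simp only [mem_edgeSet]; constructor
                 · intro _; exact ⟨i, j, Sym2.eq_swap⟩
                 · intro _; simp
      | inr j' => simp [Sym2.eq_iff]

lemma mem_Mp {σ : Equiv.Perm (Fin n)} {i j : Fin n} :
    s(Sum.inl i, (Sum.inr j : Fin n ⊕ Fin n)) ∈ Mp σ ↔ σ i = j := by
  constructor
  · rintro ⟨i', h⟩
    rw [sym2_eq] at h  -- h : i' = i ∧ σ i' = j
    obtain ⟨rfl, rfl⟩ := h
    rfl
  · rintro rfl; exact ⟨i, rfl⟩

lemma inl_mem_sym2 {i a b : Fin n} :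
    (Sum.inl i : Fin n ⊕ Fin n) ∈ s(Sum.inl a, (Sum.inr b : Fin n ⊕ Fin n)) ↔ i = a := by
  simp [Sym2.mem_iff]

lemma inr_mem_sym2 {j a b : Fin n} :
    (Sum.inr j : Fin n ⊕ Fin n) ∈ s(Sum.inl a, (Sum.inr b : Fin n ⊕ Fin n)) ↔ j = b := by
  simp [Sym2.mem_iff]

lemma Mp_subset (σ : Equiv.Perm (Fin n)) : Mp σ ⊆ (BG n).edgeSet := by
  rintro e ⟨i, rfl⟩
  exact mem_edgeSet_iff.mpr ⟨i, σ i, rfl⟩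

lemma isPM_Mp (σ : Equiv.Perm (Fin n)) : IsPM (BG n) (Mp σ) := by
  refine ⟨Mp_subset σ, ?_⟩
  intro v
  cases v with
  | inl i =>
    refine ⟨s(Sum.inl i, Sum.inr (σ i)), ⟨⟨i, rfl⟩, by simp⟩, ?_⟩
    rintro e ⟨⟨i', rfl⟩, hm⟩
    rw [inl_mem_sym2] at hm
    subst hm; rfl
  | inr j =>
    refine ⟨s(Sum.inl (σ.symm j), Sum.inr j), ⟨⟨σ.symm j, by rw [Equiv.apply_symm_apply]⟩, by simp⟩, ?_⟩
    rintro e ⟨⟨i', rfl⟩, hm⟩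
    rw [inr_mem_sym2] at hm
    subst hm
    rw [Equiv.symm_apply_apply]

lemma Mp_inj {σ τ : Equiv.Perm (Fin n)} (h : Mp σ = Mp τ) : σ = τ := by
  apply Equiv.ext
  intro i
  have : s(Sum.inl i, (Sum.inr (σ i) : Fin n ⊕ Fin n)) ∈ Mp τ := h ▸ mem_Mp.mpr rfl
  exact (mem_Mp.mp this).symm

lemma isPM_iff {M : Set (Sym2 (Fin n ⊕ Fin n))} :
    IsPM (BG n) M ↔ ∃ σ : Equiv.Perm (Fin n), M = Mp σ := by
  constructor
  · rintro ⟨hsub, huniq⟩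
    -- for each i, get the unique edge at inl i
    have key : ∀ i : Fin n, ∃ j : Fin n, s(Sum.inl i, (Sum.inr j : Fin n ⊕ Fin n)) ∈ M ∧
        ∀ e ∈ M, Sum.inl i ∈ e → e = s(Sum.inl i, (Sum.inr j : Fin n ⊕ Fin n)) := by
      intro i
      obtain ⟨e, ⟨heM, hei⟩, hu⟩ := huniq (Sum.inl i)
      obtain ⟨a, b, rfl⟩ := mem_edgeSet_iff.mp (hsub heM)
      rw [inl_mem_sym2] at hei
      subst hei
      exact ⟨b, heM, fun e' he' hi' => hu e' ⟨he', hi'⟩⟩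
    choose f hf1 hf2 using key
    have finj : Function.Injective f := by
      intro i1 i2 hf
      obtain ⟨e, ⟨heM, hei⟩, hu⟩ := huniq (Sum.inr (f i1))
      have e1 := hu _ ⟨hf1 i1, by simp⟩
      have e2 := hu _ ⟨hf1 i2, by rw [← hf]; simp⟩
      rw [← e1] at e2
      exact ((sym2_eq.mp e2).1).symm
    have fbij : Function.Bijective f := Finite.injective_iff_bijective.mp finj
    refine ⟨Equiv.ofBijective f fbij, ?_⟩
    ext e
    constructor
    · intro heM
      obtain ⟨a, b, rfl⟩ := mem_edgeSet_iff.mp (hsub heM)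
      have := hf2 a _ heM (by simp)
      rw [sym2_eq] at this
      exact mem_Mp.mpr this.2.symm
    · rintro ⟨i, rfl⟩
      exact hf1 i
  · rintro ⟨σ, rfl⟩; exact isPM_Mp σ

end Stmt12aux

lemma isPM_deleteEdges {W : Type*} {G : SimpleGraph W} {S M : Set (Sym2 W)} :
    IsPM (G.deleteEdges S) M ↔ IsPM G M ∧ M ∩ S = ∅ := by
  unfold IsPM
  rw [SimpleGraph.edgeSet_deleteEdges]
  constructor
  · rintro ⟨h1, h2⟩
    refine ⟨⟨fun e he => (h1 he).1, h2⟩, ?_⟩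
    ext e; simp only [Set.mem_inter_iff, Set.mem_empty_iff_false, iff_false, not_and]
    intro he hs; exact (h1 he).2 hs
  · rintro ⟨⟨h1, h2⟩, h3⟩
    refine ⟨fun e he => ⟨h1 he, ?_⟩, h2⟩
    intro hs
    exact absurd (Set.mem_inter he hs) (by rw [h3]; simp)

namespace Stmt12aux
open Sum

variable {n : ℕ}

/-- the candidate minimum global forcing set -/
def SF0 (n : ℕ) [NeZero n] : Finset (Sym2 (Fin n ⊕ Fin n)) :=
  ((Finset.univ.erase 0) ×ˢ (Finset.univ.erase 0)).image
    (fun p => s(Sum.inl p.1, Sum.inr p.2))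

lemma mem_SF0 [NeZero n] {i j : Fin n} :
    s(Sum.inl i, (Sum.inr j : Fin n ⊕ Fin n)) ∈ SF0 n ↔ i ≠ 0 ∧ j ≠ 0 := by
  unfold SF0
  simp only [Finset.mem_image, Finset.mem_product, Finset.mem_erase, Finset.mem_univ, and_true]
  constructor
  · rintro ⟨⟨a, b⟩, ⟨ha, hb⟩, h⟩
    obtain ⟨rfl, rfl⟩ := sym2_eq.mp h.symm
    exact ⟨ha, hb⟩
  · rintro ⟨hi, hj⟩
    exact ⟨⟨i, j⟩, ⟨hi, hj⟩, rfl⟩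

lemma card_SF0 [NeZero n] : (SF0 n).card = (n - 1) * (n - 1) := by
  unfold SF0
  rw [Finset.card_image_of_injective _ ?inj, Finset.card_product, Finset.card_erase_of_mem
    (Finset.mem_univ _), Finset.card_univ, Fintype.card_fin]
  case inj =>
    intro p q h
    obtain ⟨h1, h2⟩ := sym2_eq.mp h
    exact Prod.ext h1 h2

lemma SF0_subset [NeZero n] : ↑(SF0 n) ⊆ (BG n).edgeSet := by
  intro e he
  obtain ⟨⟨a, b⟩, _, rfl⟩ := Finset.mem_image.mp he
  exact mem_edgeSet_iff.mpr ⟨a, b, rfl⟩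

lemma isGFS_SF0 [NeZero n] : IsGFS (BG n) ↑(SF0 n) := by
  refine ⟨SF0_subset, ?_⟩
  intro M M' hM hM' hinter
  obtain ⟨σ, rfl⟩ := isPM_iff.mp hM
  obtain ⟨τ, rfl⟩ := isPM_iff.mp hM'
  have key : ∀ i j : Fin n, i ≠ 0 → j ≠ 0 → (σ i = j ↔ τ i = j) := by
    intro i j hi hj
    constructor
    · intro h
      have : s(Sum.inl i, (Sum.inr j : Fin n ⊕ Fin n)) ∈ Mp σ ∩ ↑(SF0 n) :=
        ⟨mem_Mp.mpr h, mem_SF0.mpr ⟨hi, hj⟩⟩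
      rw [hinter] at this
      exact mem_Mp.mp this.1
    · intro h
      have : s(Sum.inl i, (Sum.inr j : Fin n ⊕ Fin n)) ∈ Mp τ ∩ ↑(SF0 n) :=
        ⟨mem_Mp.mpr h, mem_SF0.mpr ⟨hi, hj⟩⟩
      rw [← hinter] at this
      exact mem_Mp.mp this.1
  have step1 : ∀ i : Fin n, i ≠ 0 → σ i = τ i := by
    intro i hi
    by_contra hne
    rcases eq_or_ne (σ i) 0 with h0 | h0
    · rcases eq_or_ne (τ i) 0 with h0' | h0'
      · exact hne (h0.trans h0'.symm)
      · exact hne ((key i (τ i) hi h0').mpr rfl)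
    · exact hne ((key i (σ i) hi h0).mp rfl).symm
  have hστ : σ = τ := by
    apply Equiv.ext
    intro i
    rcases eq_or_ne i 0 with rfl | hi
    · by_contra hne
      obtain ⟨i, hi⟩ := τ.surjective (σ 0)
      have hine : i ≠ 0 := by rintro rfl; exact hne hi.symm
      have := (step1 i hine).trans hi
      exact hine (σ.injective this)
    · exact step1 i hi
  rw [hστ]

end Stmt12aux

namespace Stmt12aux
open Sum

variable {n : ℕ}

lemma card_ltPairs (n : ℕ) :
    (Finset.univ.filter fun p : Fin n × Fin n => p.1 < p.2).card = n * (n-1) / 2 := by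
  rw [Finset.card_eq_sum_card_fiberwise (f := Prod.snd) (t := Finset.univ) (fun x _ => Finset.mem_univ _)]
  have : ∀ j : Fin n, ((Finset.univ.filter fun p : Fin n × Fin n => p.1 < p.2).filter
      fun p => p.2 = j).card = (j : ℕ) := by
    intro j
    rw [← Fin.card_Iio (b := j)]
    apply Finset.card_bij (fun p _ => p.1)
    · intro p hp
      simp only [Finset.mem_filter, Finset.mem_univ, true_and] at hp
      simp [Finset.mem_Iio, hp.2 ▸ hp.1]
    · intro p hp q hq h
      simp only [Finset.mem_filter, Finset.mem_univ, true_and] at hp hq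
      exact Prod.ext h (hp.2.trans hq.2.symm)
    · intro b hb
      refine ⟨(b, j), ?_, rfl⟩
      simp only [Finset.mem_filter, Finset.mem_univ, true_and]
      constructor
      · exact Finset.mem_Iio.mp hb
      · trivial
  simp_rw [this]
  rw [Fin.sum_univ_eq_sum_range (fun i => i) n]
  exact Finset.sum_range_id n

/-- permutations dominated by the identity are the identity -/
lemma perm_eq_one_of_le (ρ : Equiv.Perm (Fin n)) (h : ∀ i, ρ i ≤ i) : ρ = 1 := by
  have key : ∀ m : ℕ, ∀ i : Fin n, (i : ℕ) = m → ρ i = i := by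
    intro m
    induction m using Nat.strong_induction_on with
    | _ m ih =>
      intro i him
      rcases lt_or_eq_of_le (h i) with hlt | heq
      · exfalso
        have h2 : ρ (ρ i) = ρ i := ih (ρ i) (him ▸ hlt) (ρ i) rfl
        have := ρ.injective (h2.trans (rfl : ρ i = ρ i))
        exact absurd (this ▸ hlt) (lt_irrefl _)
      · exact heq
  apply Equiv.ext
  intro i
  exact key i i rfl

/-- the candidate minimum anti-forcing set for `Mp σ` -/
def Saf (σ : Equiv.Perm (Fin n)) : Finset (Sym2 (Fin n ⊕ Fin n)) :=
  (Finset.univ.filter fun p : Fin n × Fin n => p.1 < p.2).image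
    (fun p => s(Sum.inl p.1, Sum.inr (σ p.2)))

lemma mem_Saf {σ : Equiv.Perm (Fin n)} {i j : Fin n} :
    s(Sum.inl i, (Sum.inr j : Fin n ⊕ Fin n)) ∈ Saf σ ↔ i < σ.symm j := by
  unfold Saf
  simp only [Finset.mem_image, Finset.mem_filter, Finset.mem_univ, true_and]
  constructor
  · rintro ⟨⟨a, b⟩, hab, h⟩
    obtain ⟨rfl, rfl⟩ := sym2_eq.mp h.symm
    rwa [Equiv.symm_apply_apply]
  · intro h
    exact ⟨(i, σ.symm j), h, by rw [Equiv.apply_symm_apply]⟩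

lemma card_Saf (σ : Equiv.Perm (Fin n)) : (Saf σ).card = n * (n-1) / 2 := by
  unfold Saf
  rw [Finset.card_image_of_injective _ ?inj]
  · exact card_ltPairs n
  case inj =>
    intro p q h
    obtain ⟨h1, h2⟩ := sym2_eq.mp h
    exact Prod.ext h1 (σ.injective h2)

lemma Saf_inter_Mp (σ : Equiv.Perm (Fin n)) : (Mp σ) ∩ ↑(Saf σ) = ∅ := by
  ext e
  simp only [Set.mem_inter_iff, Set.mem_empty_iff_false, iff_false, not_and]
  rintro ⟨i, rfl⟩ hS
  rw [Finset.mem_coe, mem_Saf, Equiv.symm_apply_apply] at hS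
  exact absurd hS (lt_irrefl i)

lemma isAntiForcing_Saf (σ : Equiv.Perm (Fin n)) :
    IsAntiForcingSet (BG n) (Mp σ) ↑(Saf σ) := by
  constructor
  · intro e he
    rw [Finset.mem_coe] at he
    obtain ⟨⟨a, b⟩, hab, rfl⟩ := Finset.mem_image.mp he
    simp only [Finset.mem_filter, Finset.mem_univ, true_and] at hab
    constructor
    · exact mem_edgeSet_iff.mpr ⟨a, σ b, rfl⟩
    · intro hM
      rw [mem_Mp] at hM
      exact absurd (σ.injective hM) (ne_of_lt hab)
  · refine ⟨Mp σ, isPM_deleteEdges.mpr ⟨isPM_Mp σ, Saf_inter_Mp σ⟩, ?_⟩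
    intro M' hM'
    obtain ⟨hPM, hint⟩ := isPM_deleteEdges.mp hM'
    obtain ⟨π, rfl⟩ := isPM_iff.mp hPM
    have hle : ∀ i : Fin n, σ.symm (π i) ≤ i := by
      intro i
      by_contra hlt
      push_neg at hlt
      have : s(Sum.inl i, (Sum.inr (π i) : Fin n ⊕ Fin n)) ∈ Mp π ∩ ↑(Saf σ) :=
        ⟨mem_Mp.mpr rfl, by rw [Finset.mem_coe, mem_Saf]; exact hlt⟩
      rw [hint] at this
      exact this
    have : π.trans σ.symm = 1 := perm_eq_one_of_le _ hle
    have hπσ : π = σ := by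
      apply Equiv.ext
      intro i
      have := congrArg (fun ρ : Equiv.Perm (Fin n) => σ (ρ i)) this
      simpa using this
    rw [hπσ]

lemma antiforcing_lower {σ : Equiv.Perm (Fin n)} {S : Set (Sym2 (Fin n ⊕ Fin n))}
    (hS : IsAntiForcingSet (BG n) (Mp σ) S) : n * (n-1) / 2 ≤ S.ncard := by
  classical
  obtain ⟨hsub, Muniq, hMuniq1, hMuniq2⟩ := hS
  have hSM : Mp σ ∩ S = ∅ := by
    ext e
    simp only [Set.mem_inter_iff, Set.mem_empty_iff_false, iff_false, not_and]
    intro he hs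
    exact (hsub hs).2 he
  have hMpm : IsPM ((BG n).deleteEdges S) (Mp σ) := isPM_deleteEdges.mpr ⟨isPM_Mp σ, hSM⟩
  -- for every i < j, one of the two swap edges must be in S
  have pairkey : ∀ i j : Fin n, i < j →
      s(Sum.inl i, (Sum.inr (σ j) : Fin n ⊕ Fin n)) ∈ S ∨
      s(Sum.inl j, (Sum.inr (σ i) : Fin n ⊕ Fin n)) ∈ S := by
    intro i j hij
    by_contra hno
    push_neg at hno
    obtain ⟨h1, h2⟩ := hno
    set π : Equiv.Perm (Fin n) := (Equiv.swap i j).trans σ with hπ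
    have hπpm : IsPM ((BG n).deleteEdges S) (Mp π) := by
      apply isPM_deleteEdges.mpr
      refine ⟨isPM_Mp π, ?_⟩
      ext e
      simp only [Set.mem_inter_iff, Set.mem_empty_iff_false, iff_false, not_and]
      rintro ⟨k, rfl⟩ hkS
      rcases eq_or_ne k i with rfl | hki
      · rw [hπ] at hkS
        simp only [Equiv.trans_apply, Equiv.swap_apply_left] at hkS
        exact h1 hkS
      rcases eq_or_ne k j with rfl | hkj
      · rw [hπ] at hkS
        simp only [Equiv.trans_apply, Equiv.swap_apply_right] at hkS
        exact h2 hkS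
      · have : π k = σ k := by
          rw [hπ]; simp [Equiv.swap_apply_of_ne_of_ne hki hkj]
        rw [this] at hkS
        have : s(Sum.inl k, (Sum.inr (σ k) : Fin n ⊕ Fin n)) ∈ Mp σ ∩ S :=
          ⟨mem_Mp.mpr rfl, hkS⟩
        rw [hSM] at this
        exact this
    have hMeq : Mp π = Mp σ := (hMuniq2 _ hπpm).trans (hMuniq2 _ hMpm).symm
    have hπσ : π = σ := Mp_inj hMeq
    have : π i = σ j := by rw [hπ]; simp
    rw [hπσ] at this
    exact absurd (σ.injective this) (ne_of_lt hij)
  -- build an injection from lt-pairs into S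
  have hfin : S.Finite := Set.toFinite S
  set f : Fin n × Fin n → Sym2 (Fin n ⊕ Fin n) := fun p =>
    if s(Sum.inl p.1, (Sum.inr (σ p.2) : Fin n ⊕ Fin n)) ∈ S
    then s(Sum.inl p.1, Sum.inr (σ p.2))
    else s(Sum.inl p.2, Sum.inr (σ p.1)) with hf
  have hmaps : ∀ p ∈ (Finset.univ.filter fun p : Fin n × Fin n => p.1 < p.2),
      f p ∈ hfin.toFinset := by
    intro p hp
    simp only [Finset.mem_filter, Finset.mem_univ, true_and] at hp
    rw [Set.Finite.mem_toFinset, hf]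
    dsimp only
    split_ifs with h
    · exact h
    · exact (pairkey p.1 p.2 hp).resolve_left h
  have hinj : Set.InjOn f ↑(Finset.univ.filter fun p : Fin n × Fin n => p.1 < p.2) := by
    intro p hp q hq hfpq
    simp only [Finset.coe_filter, Set.mem_setOf_eq] at hp hq
    rw [hf] at hfpq
    dsimp only at hfpq
    -- analyze the four cases
    split_ifs at hfpq with h1 h2 h2 <;>
      obtain ⟨ha, hb⟩ := sym2_eq.mp hfpq
    · exact Prod.ext ha (σ.injective hb)
    · exfalso
      have h3 : p.2 = q.1 := σ.injective hb
      exact absurd (((hp.2.trans_eq h3).trans hq.2).trans_eq ha.symm) (lt_irrefl _)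
    · exfalso
      have h3 : p.1 = q.2 := σ.injective hb
      exact absurd (((hq.2.trans_eq h3.symm).trans hp.2).trans_eq ha) (lt_irrefl _)
    · exact Prod.ext (σ.injective hb) ha
  calc n * (n-1) / 2 = (Finset.univ.filter fun p : Fin n × Fin n => p.1 < p.2).card :=
        (card_ltPairs n).symm
    _ ≤ hfin.toFinset.card := Finset.card_le_card_of_injOn f hmaps hinj
    _ = S.ncard := (Set.ncard_eq_toFinset_card S hfin).symm

lemma af_val (σ : Equiv.Perm (Fin n)) :
    sInf {k | ∃ S, IsAntiForcingSet (BG n) (Mp σ) S ∧ S.ncard = k} = n * (n-1) / 2 := by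
  have hmem : n * (n-1) / 2 ∈ {k | ∃ S, IsAntiForcingSet (BG n) (Mp σ) S ∧ S.ncard = k} :=
    ⟨↑(Saf σ), isAntiForcing_Saf σ, by rw [Set.ncard_coe_finset]; exact card_Saf σ⟩
  apply le_antisymm
  · exact Nat.sInf_le hmem
  · apply le_csInf ⟨_, hmem⟩
    rintro k ⟨S, hS, rfl⟩
    exact antiforcing_lower hS

end Stmt12aux

namespace Stmt12aux
open Sum

variable {n : ℕ}

lemma ext_perm [NeZero n] (xs ys zs : List (Fin n)) (hxs : xs.Nodup) (hys : ys.Nodup)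
    (hperm : zs.Perm ys) (hlen : xs.length = ys.length) :
    ∃ σ τ : Equiv.Perm (Fin n),
      (∀ t, t < xs.length → σ (xs.getD t 0) = ys.getD t 0 ∧ τ (xs.getD t 0) = zs.getD t 0) ∧
      (∀ v, v ∉ xs → σ v = τ v) := by
  classical
  have hzs : zs.Nodup := hperm.nodup_iff.mpr hys
  have hzlen : zs.length = ys.length := hperm.length_eq
  have hzfin : zs.toFinset = ys.toFinset := List.toFinset_eq_of_perm _ _ hperm
  have hcards : xs.toFinsetᶜ.card = ys.toFinsetᶜ.card := by
    rw [Finset.card_compl, Finset.card_compl, List.toFinset_card_of_nodup hxs,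
      List.toFinset_card_of_nodup hys, hlen]
  set φ := Finset.equivOfCardEq hcards with hφ
  -- the two functions
  have build : ∀ ws : List (Fin n), ws.Nodup → ws.length = xs.length →
      ws.toFinset = ys.toFinset →
      ∃ σ : Equiv.Perm (Fin n), (∀ t, t < xs.length → σ (xs.getD t 0) = ws.getD t 0) ∧
        (∀ v (hv : v ∉ xs.toFinset), σ v = (φ ⟨v, by simpa using hv⟩ : Fin n)) := by
    intro ws hws hwlen hwfin
    set f : Fin n → Fin n := fun v =>
      if h : v ∈ xs.toFinset then ws.getD (xs.idxOf v) 0 else (φ ⟨v, by simpa using h⟩ : Fin n)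
      with hfdef
    have hval : ∀ t, t < xs.length → f (xs.getD t 0) = ws.getD t 0 := by
      intro t ht
      have hmem : xs.getD t 0 ∈ xs.toFinset := by
        rw [List.getD_eq_getElem _ _ ht, List.mem_toFinset]
        exact List.getElem_mem _
      rw [hfdef]
      simp only [hmem, dif_pos]
      rw [List.getD_eq_getElem _ _ ht, List.Nodup.idxOf_getElem hxs t ht]
    have hout : ∀ v (hv : v ∉ xs.toFinset), f v = (φ ⟨v, by simpa using hv⟩ : Fin n) := by
      intro v hv
      rw [hfdef]
      simp only [hv, dif_neg, not_false_iff]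
    have hinj : Function.Injective f := by
      intro a b hab
      by_cases ha : a ∈ xs.toFinset <;> by_cases hb : b ∈ xs.toFinset
      · have hia : xs.idxOf a < xs.length := List.idxOf_lt_length_iff.mpr (List.mem_toFinset.mp ha)
        have hib : xs.idxOf b < xs.length := List.idxOf_lt_length_iff.mpr (List.mem_toFinset.mp hb)
        rw [hfdef] at hab
        simp only [ha, hb, dif_pos] at hab
        rw [List.getD_eq_getElem _ _ (by omega : xs.idxOf a < ws.length),
          List.getD_eq_getElem _ _ (by omega : xs.idxOf b < ws.length)] at hab
        have := (List.Nodup.getElem_inj_iff hws).mp hab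
        calc a = xs[xs.idxOf a] := (List.getElem_idxOf hia).symm
          _ = xs[xs.idxOf b] := by congr 1
          _ = b := List.getElem_idxOf hib
      · exfalso
        have h1 : f a ∈ ws.toFinset := by
          have hia : xs.idxOf a < xs.length := List.idxOf_lt_length_iff.mpr (List.mem_toFinset.mp ha)
          rw [hfdef]; simp only [ha, dif_pos]
          rw [List.getD_eq_getElem _ _ (by omega : xs.idxOf a < ws.length), List.mem_toFinset]
          exact List.getElem_mem _
        have h2 : f b ∈ ys.toFinsetᶜ := by
          rw [hout b hb]
          exact (φ _).2
        rw [hab, hwfin] at h1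
        exact (Finset.mem_compl.mp h2) h1
      · exfalso
        have h1 : f b ∈ ws.toFinset := by
          have hib : xs.idxOf b < xs.length := List.idxOf_lt_length_iff.mpr (List.mem_toFinset.mp hb)
          rw [hfdef]; simp only [hb, dif_pos]
          rw [List.getD_eq_getElem _ _ (by omega : xs.idxOf b < ws.length), List.mem_toFinset]
          exact List.getElem_mem _
        have h2 : f a ∈ ys.toFinsetᶜ := by
          rw [hout a ha]
          exact (φ _).2
        rw [← hab, hwfin] at h1
        exact (Finset.mem_compl.mp h2) h1
      · rw [hout a ha, hout b hb] at hab
        have := φ.injective (Subtype.ext hab)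
        exact Subtype.ext_iff.mp this
    refine ⟨Equiv.ofBijective f (Finite.injective_iff_bijective.mp hinj), ?_, ?_⟩
    · intro t ht; exact hval t ht
    · intro v hv; exact hout v hv
  obtain ⟨σ, hσ1, hσ2⟩ := build ys hys hlen.symm rfl
  obtain ⟨τ, hτ1, hτ2⟩ := build zs hzs (by omega) hzfin
  refine ⟨σ, τ, fun t ht => ⟨hσ1 t ht, hτ1 t ht⟩, fun v hv => ?_⟩
  have hv' : v ∉ xs.toFinset := by rwa [List.mem_toFinset]
  rw [hσ2 v hv', hτ2 v hv']

end Stmt12aux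

namespace Stmt12aux
open Sum

variable {n : ℕ}

/-- Cycle output predicate -/
def CycOut (n : ℕ) [NeZero n] (T : Finset (Fin n × Fin n)) : Prop :=
  ∃ (k : ℕ) (xs ys zs : List (Fin n)),
    2 ≤ k ∧ xs.length = k ∧ ys.length = k ∧ zs.length = k ∧
    xs.Nodup ∧ ys.Nodup ∧ zs.Perm ys ∧
    (∃ t0, t0 < k ∧ zs.getD t0 0 ≠ ys.getD t0 0) ∧
    (∀ t, t < k → (xs.getD t 0, ys.getD t 0) ∈ T ∧ (xs.getD t 0, zs.getD t 0) ∈ T)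

lemma cycOut_mono [NeZero n] {T T' : Finset (Fin n × Fin n)} (h : T ⊆ T')
    (hT : CycOut n T) : CycOut n T' := by
  obtain ⟨k, xs, ys, zs, h1, h2, h3, h4, h5, h6, h7, h8, h9⟩ := hT
  exact ⟨k, xs, ys, zs, h1, h2, h3, h4, h5, h6, h7, h8,
    fun t ht => ⟨h (h9 t ht).1, h (h9 t ht).2⟩⟩

lemma getD_map_range [NeZero n] (f : ℕ → Fin n) {k t : ℕ} (ht : t < k) :
    ((List.range k).map f).getD t 0 = f t := by
  rw [List.getD_eq_getElem _ _ (by simpa using ht), List.getElem_map, List.getElem_range]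

lemma cyc_mindeg [NeZero n] (A B : Finset (Fin n)) (T : Finset (Fin n × Fin n))
    (hsub : T ⊆ A ×ˢ B) (hne : T.Nonempty)
    (hA : ∀ a ∈ A, 2 ≤ (T.filter fun p => p.1 = a).card)
    (hB : ∀ b ∈ B, 2 ≤ (T.filter fun p => p.2 = b).card) : CycOut n T := by
  classical
  obtain ⟨p0, hp0⟩ := hne
  have step : ∀ p : Fin n × Fin n, ∃ q : Fin n × Fin n,
      p ∈ T → q ∈ T ∧ (q.1, p.2) ∈ T ∧ q.1 ≠ p.1 ∧ q.2 ≠ p.2 := by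
    intro p
    by_cases hp : p ∈ T
    · have hpB : p.2 ∈ B := (Finset.mem_product.mp (hsub hp)).2
      have h2 := hB p.2 hpB
      obtain ⟨r, hr, hrp⟩ := Finset.exists_mem_ne
        (s := T.filter fun p' => p'.2 = p.2) (by omega) p
      rw [Finset.mem_filter] at hr
      have hr1 : r.1 ≠ p.1 := fun h => hrp (Prod.ext h hr.2)
      have hrA : r.1 ∈ A := (Finset.mem_product.mp (hsub hr.1)).1
      have h3 := hA r.1 hrA
      obtain ⟨q, hq, hqr⟩ := Finset.exists_mem_ne
        (s := T.filter fun q' => q'.1 = r.1) (by omega) r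
      rw [Finset.mem_filter] at hq
      refine ⟨q, fun _ => ⟨hq.1, ?_, ?_, ?_⟩⟩
      · have : (q.1, p.2) = r := Prod.ext hq.2 hr.2.symm
        rw [this]; exact hr.1
      · rw [hq.2]; exact hr1
      · intro h; exact hqr (Prod.ext hq.2 (h.trans hr.2.symm))
    · exact ⟨p, fun h => absurd h hp⟩
  choose g hg using step
  set F : ℕ → Fin n × Fin n := fun t => g^[t] p0 with hFdef
  have hFsucc : ∀ t, F (t+1) = g (F t) := fun t => Function.iterate_succ_apply' g t p0
  have hFT : ∀ t, F t ∈ T := by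
    intro t
    induction t with
    | zero => exact hp0
    | succ t iht => rw [hFsucc]; exact (hg (F t) iht).1
  have hstep : ∀ t, ((F (t+1)).1, (F t).2) ∈ T ∧ (F (t+1)).1 ≠ (F t).1 ∧
      (F (t+1)).2 ≠ (F t).2 := by
    intro t
    have := hg (F t) (hFT t)
    rw [← hFsucc t] at this
    exact ⟨this.2.1, this.2.2.1, this.2.2.2⟩
  set w : ℕ → Fin n × Bool := fun m =>
    if m % 2 = 0 then ((F (m/2)).1, false) else ((F (m/2)).2, true) with hwdef
  have weven : ∀ m, m % 2 = 0 → w m = ((F (m/2)).1, false) := fun m h => if_pos h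
  have wodd : ∀ m, m % 2 ≠ 0 → w m = ((F (m/2)).2, true) := fun m h => if_neg h
  -- pigeonhole
  have hcardlt : (Finset.univ : Finset (Fin n × Bool)).card < (Finset.range (2*n+1)).card := by
    have hn0 : 0 < n := Nat.pos_of_ne_zero (NeZero.ne n)
    simp [Fintype.card_prod]
    omega
  obtain ⟨a, _, b, _, hab, hwab⟩ :=
    Finset.exists_ne_map_eq_of_card_lt_of_maps_to hcardlt (fun m _ => Finset.mem_univ (w m))
  have hex : ∃ m, ∃ s, s < m ∧ w s = w m := by
    rcases Nat.lt_or_ge a b with h | h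
    · exact ⟨b, a, h, hwab⟩
    · exact ⟨a, b, lt_of_le_of_ne h (Ne.symm hab), hwab.symm⟩
  have hspec := Nat.find_spec hex
  set m0 := Nat.find hex with hm0def
  obtain ⟨s, hsm, hws⟩ := hspec
  have hmin : ∀ u v, u < v → v < m0 → w u ≠ w v :=
    fun u v huv hv h => Nat.find_min hex hv ⟨u, huv, h⟩
  -- parity
  have hpar : s % 2 = m0 % 2 := by
    by_cases h1 : s % 2 = 0 <;> by_cases h2 : m0 % 2 = 0
    · omega
    · exfalso
      rw [weven s h1, wodd m0 h2] at hws
      exact Bool.false_ne_true (congrArg Prod.snd hws)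
    · exfalso
      rw [wodd s h1, weven m0 h2] at hws
      exact Bool.false_ne_true (congrArg Prod.snd hws).symm
    · omega
  -- gap at least 4
  have hne2 : m0 ≠ s + 2 := by
    intro h
    by_cases hp2 : s % 2 = 0
    · rw [weven s hp2, h, weven (s+2) (by omega)] at hws
      have hdiv : (s+2)/2 = s/2 + 1 := by omega
      rw [hdiv] at hws
      exact (hstep (s/2)).2.1 (congrArg Prod.fst hws).symm
    · rw [wodd s hp2, h, wodd (s+2) (by omega)] at hws
      have hdiv : (s+2)/2 = s/2 + 1 := by omega
      rw [hdiv] at hws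
      exact (hstep (s/2)).2.2 (congrArg Prod.fst hws).symm
  have hgap : s + 4 ≤ m0 := by omega
  by_cases hp2 : s % 2 = 0
  -- EVEN CASE
  · set i := s / 2 with hi
    set k := (m0 - s) / 2 with hk
    have hs2 : s = 2 * i := by omega
    have hm2 : m0 = 2 * (i + k) := by omega
    have hk2 : 2 ≤ k := by omega
    have hxixj : (F i).1 = (F (i+k)).1 := by
      rw [weven s hp2, weven m0 (by omega)] at hws
      have hm02 : m0 / 2 = i + k := by omega
      rw [hm02] at hws
      exact (Prod.ext_iff.mp hws).1
    refine ⟨k, (List.range k).map (fun t => (F (i+t)).1),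
      (List.range k).map (fun t => (F (i+t)).2),
      ((List.range k).map (fun t => (F (i+t)).2)).rotate (k-1),
      hk2, by simp, by simp, by simp, ?_, ?_, List.rotate_perm _ _, ?_, ?_⟩
    · -- xs nodup
      apply List.Nodup.map_on ?_ (List.nodup_range (n := k))
      intro t ht t' ht' heq
      rw [List.mem_range] at ht ht'
      by_contra hne
      rcases Nat.lt_or_ge t t' with h | h
      · exact hmin (2*(i+t)) (2*(i+t')) (by omega) (by omega)
          (by rw [weven _ (by omega), weven _ (by omega)]
              have e1 : 2*(i+t)/2 = i + t := by omega
              have e2 : 2*(i+t')/2 = i + t' := by omega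
              rw [e1, e2, heq])
      · exact hmin (2*(i+t')) (2*(i+t)) (by omega) (by omega)
          (by rw [weven _ (by omega), weven _ (by omega)]
              have e1 : 2*(i+t)/2 = i + t := by omega
              have e2 : 2*(i+t')/2 = i + t' := by omega
              rw [e1, e2, heq])
    · -- ys nodup
      apply List.Nodup.map_on ?_ (List.nodup_range (n := k))
      intro t ht t' ht' heq
      rw [List.mem_range] at ht ht'
      by_contra hne
      rcases Nat.lt_or_ge t t' with h | h
      · exact hmin (2*(i+t)+1) (2*(i+t')+1) (by omega) (by omega)
          (by rw [wodd _ (by omega), wodd _ (by omega)]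
              have e1 : (2*(i+t)+1)/2 = i + t := by omega
              have e2 : (2*(i+t')+1)/2 = i + t' := by omega
              rw [e1, e2, heq])
      · exact hmin (2*(i+t')+1) (2*(i+t)+1) (by omega) (by omega)
          (by rw [wodd _ (by omega), wodd _ (by omega)]
              have e1 : (2*(i+t)+1)/2 = i + t := by omega
              have e2 : (2*(i+t')+1)/2 = i + t' := by omega
              rw [e1, e2, heq])
    · -- witness t0 = 0
      refine ⟨0, by omega, ?_⟩
      have hlen : ((List.range k).map (fun t => (F (i+t)).2)).length = k := by simp
      have hrot : (((List.range k).map (fun t => (F (i+t)).2)).rotate (k-1)).getD 0 0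
          = (F (i+(k-1))).2 := by
        rw [List.getD_eq_getElem _ _ (by simp; omega), List.getElem_rotate]
        simp only [hlen]
        have : (0 + (k-1)) % k = k - 1 := by
          rw [Nat.zero_add, Nat.mod_eq_of_lt (by omega)]
        simp only [this]
        rw [List.getElem_map, List.getElem_range]
      rw [hrot, getD_map_range _ (by omega : 0 < k)]
      intro heq
      exact hmin (2*i+1) (2*(i+(k-1))+1) (by omega) (by omega)
        (by rw [wodd _ (by omega), wodd _ (by omega)]
            have e1 : (2*i+1)/2 = i := by omega
            have e2 : (2*(i+(k-1))+1)/2 = i + (k-1) := by omega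
            rw [e1, e2, heq, Nat.add_zero])
    · -- the membership clauses
      intro t ht
      constructor
      · rw [getD_map_range _ ht, getD_map_range _ ht]
        have : ((F (i+t)).1, (F (i+t)).2) = F (i+t) := rfl
        rw [this]; exact hFT (i+t)
      · have hlen : ((List.range k).map (fun t => (F (i+t)).2)).length = k := by simp
        have hrot : (((List.range k).map (fun t => (F (i+t)).2)).rotate (k-1)).getD t 0
            = (F (i + (t + (k-1)) % k)).2 := by
          rw [List.getD_eq_getElem _ _ (by simp; omega), List.getElem_rotate]
          simp only [hlen]
          rw [List.getElem_map, List.getElem_range]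
        rw [getD_map_range _ ht, hrot]
        rcases Nat.eq_zero_or_pos t with rfl | ht1
        · have hmod : (0 + (k-1)) % k = k - 1 := by
            rw [Nat.zero_add, Nat.mod_eq_of_lt (by omega)]
          rw [hmod]
          have h1 : (F (i+0)).1 = (F ((i+(k-1))+1)).1 := by
            rw [Nat.add_zero]
            have : i + (k-1) + 1 = i + k := by omega
            rw [this]; exact hxixj
          rw [h1]
          exact (hstep (i+(k-1))).1
        · have hmod : (t + (k-1)) % k = t - 1 := by
            have h1 : t + (k-1) = (t-1) + k := by omega
            rw [h1, Nat.add_mod_right, Nat.mod_eq_of_lt (by omega)]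
          rw [hmod]
          have h2 : i + t = (i + (t-1)) + 1 := by omega
          rw [h2]
          exact (hstep (i+(t-1))).1
  -- ODD CASE
  · set i := s / 2 with hi
    set k := (m0 - s) / 2 with hk
    have hs2 : s = 2 * i + 1 := by omega
    have hm2 : m0 = 2 * (i + k) + 1 := by omega
    have hk2 : 2 ≤ k := by omega
    have hyy : (F i).2 = (F (i+k)).2 := by
      rw [wodd s hp2, wodd m0 (by omega)] at hws
      have e2 : m0 / 2 = i + k := by omega
      rw [e2] at hws
      exact (Prod.ext_iff.mp hws).1
    refine ⟨k, (List.range k).map (fun t => (F (i+1+t)).1),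
      (List.range k).map (fun t => (F (i+t)).2),
      ((List.range k).map (fun t => (F (i+t)).2)).rotate 1,
      hk2, by simp, by simp, by simp, ?_, ?_, List.rotate_perm _ _, ?_, ?_⟩
    · -- xs nodup
      apply List.Nodup.map_on ?_ (List.nodup_range (n := k))
      intro t ht t' ht' heq
      rw [List.mem_range] at ht ht'
      by_contra hne
      rcases Nat.lt_or_ge t t' with h | h
      · exact hmin (2*(i+1+t)) (2*(i+1+t')) (by omega) (by omega)
          (by rw [weven _ (by omega), weven _ (by omega)]
              have e1 : 2*(i+1+t)/2 = i+1+t := by omega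
              have e2 : 2*(i+1+t')/2 = i+1+t' := by omega
              rw [e1, e2, heq])
      · exact hmin (2*(i+1+t')) (2*(i+1+t)) (by omega) (by omega)
          (by rw [weven _ (by omega), weven _ (by omega)]
              have e1 : 2*(i+1+t)/2 = i+1+t := by omega
              have e2 : 2*(i+1+t')/2 = i+1+t' := by omega
              rw [e1, e2, heq])
    · -- ys nodup
      apply List.Nodup.map_on ?_ (List.nodup_range (n := k))
      intro t ht t' ht' heq
      rw [List.mem_range] at ht ht'
      by_contra hne
      rcases Nat.lt_or_ge t t' with h | h
      · exact hmin (2*(i+t)+1) (2*(i+t')+1) (by omega) (by omega)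
          (by rw [wodd _ (by omega), wodd _ (by omega)]
              have e1 : (2*(i+t)+1)/2 = i + t := by omega
              have e2 : (2*(i+t')+1)/2 = i + t' := by omega
              rw [e1, e2, heq])
      · exact hmin (2*(i+t')+1) (2*(i+t)+1) (by omega) (by omega)
          (by rw [wodd _ (by omega), wodd _ (by omega)]
              have e1 : (2*(i+t)+1)/2 = i + t := by omega
              have e2 : (2*(i+t')+1)/2 = i + t' := by omega
              rw [e1, e2, heq])
    · -- witness t0 = 0
      refine ⟨0, by omega, ?_⟩
      have hlen : ((List.range k).map (fun t => (F (i+t)).2)).length = k := by simp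
      have hrot : (((List.range k).map (fun t => (F (i+t)).2)).rotate 1).getD 0 0
          = (F (i+1)).2 := by
        rw [List.getD_eq_getElem _ _ (by simp; omega), List.getElem_rotate]
        simp only [hlen]
        have : (0 + 1) % k = 1 := by
          rw [Nat.zero_add, Nat.mod_eq_of_lt (by omega)]
        simp only [this]
        rw [List.getElem_map, List.getElem_range]
      rw [hrot, getD_map_range _ (by omega : 0 < k)]
      intro heq
      exact hmin (2*i+1) (2*(i+1)+1) (by omega) (by omega)
        (by rw [wodd _ (by omega), wodd _ (by omega)]
            have e1 : (2*i+1)/2 = i := by omega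
            have e2 : (2*(i+1)+1)/2 = i + 1 := by omega
            rw [e1, e2, heq, Nat.add_zero])
    · -- membership clauses
      intro t ht
      constructor
      · rw [getD_map_range _ ht, getD_map_range _ ht]
        have h2 : i + 1 + t = (i + t) + 1 := by omega
        rw [h2]
        exact (hstep (i+t)).1
      · have hlen : ((List.range k).map (fun t => (F (i+t)).2)).length = k := by simp
        have hrot : (((List.range k).map (fun t => (F (i+t)).2)).rotate 1).getD t 0
            = (F (i + (t + 1) % k)).2 := by
          rw [List.getD_eq_getElem _ _ (by simp; omega), List.getElem_rotate]
          simp only [hlen]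
          rw [List.getElem_map, List.getElem_range]
        rw [getD_map_range _ ht, hrot]
        rcases Nat.lt_or_ge t (k-1) with hlt | hge
        · have hmod : (t + 1) % k = t + 1 := Nat.mod_eq_of_lt (by omega)
          rw [hmod]
          have h2 : i + 1 + t = i + (t+1) := by omega
          rw [h2]
          have : ((F (i+(t+1))).1, (F (i+(t+1))).2) = F (i+(t+1)) := rfl
          rw [this]
          exact hFT (i+(t+1))
        · -- t = k - 1
          have ht1 : t = k - 1 := by omega
          have hmod : (t + 1) % k = 0 := by
            have : t + 1 = k := by omega
            rw [this, Nat.mod_self]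
          simp only [hmod, Nat.add_zero]
          rw [hyy]
          have h2 : i + 1 + t = i + k := by omega
          rw [h2]
          have : ((F (i+k)).1, (F (i+k)).2) = F (i+k) := rfl
          rw [this]
          exact hFT (i+k)

end Stmt12aux

namespace Stmt12aux
open Sum

variable {n : ℕ}

lemma cyc_rel [NeZero n] :
    ∀ (N : ℕ) (A B : Finset (Fin n)) (T : Finset (Fin n × Fin n)),
      A.card + B.card = N → T ⊆ A ×ˢ B → A.card + B.card ≤ T.card → T.Nonempty →
      CycOut n T := by
  intro N
  induction N using Nat.strong_induction_on with
  | _ N ih =>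
    intro A B T hN hsub hcard hne
    classical
    have hBne : B.Nonempty := by
      obtain ⟨p, hp⟩ := hne
      exact ⟨p.2, (Finset.mem_product.mp (hsub hp)).2⟩
    have hAne : A.Nonempty := by
      obtain ⟨p, hp⟩ := hne
      exact ⟨p.1, (Finset.mem_product.mp (hsub hp)).1⟩
    by_cases hA : ∃ a ∈ A, (T.filter fun p => p.1 = a).card ≤ 1
    · obtain ⟨a, haA, hdeg⟩ := hA
      have hsplit := Finset.card_filter_add_card_filter_not (s := T)
        (p := fun p => p.1 = a)
      have hsub' : (T.filter fun p => ¬ p.1 = a) ⊆ (A.erase a) ×ˢ B := by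
        intro p hp
        rw [Finset.mem_filter] at hp
        have := hsub hp.1
        rw [Finset.mem_product] at this ⊢
        exact ⟨Finset.mem_erase.mpr ⟨hp.2, this.1⟩, this.2⟩
      have hAcard : (A.erase a).card = A.card - 1 := Finset.card_erase_of_mem haA
      have hApos : 1 ≤ A.card := Finset.card_pos.mpr hAne
      have hBpos : 1 ≤ B.card := Finset.card_pos.mpr hBne
      have hcard' : (A.erase a).card + B.card ≤ (T.filter fun p => ¬ p.1 = a).card := by
        omega
      have hne' : (T.filter fun p => ¬ p.1 = a).Nonempty := Finset.card_pos.mp (by omega)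
      have := ih ((A.erase a).card + B.card) (by omega) (A.erase a) B _ rfl hsub' hcard' hne'
      exact cycOut_mono (Finset.filter_subset _ _) this
    by_cases hB : ∃ b ∈ B, (T.filter fun p => p.2 = b).card ≤ 1
    · obtain ⟨b, hbB, hdeg⟩ := hB
      have hsplit := Finset.card_filter_add_card_filter_not (s := T)
        (p := fun p => p.2 = b)
      have hsub' : (T.filter fun p => ¬ p.2 = b) ⊆ A ×ˢ (B.erase b) := by
        intro p hp
        rw [Finset.mem_filter] at hp
        have := hsub hp.1
        rw [Finset.mem_product] at this ⊢
        exact ⟨this.1, Finset.mem_erase.mpr ⟨hp.2, this.2⟩⟩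
      have hBcard : (B.erase b).card = B.card - 1 := Finset.card_erase_of_mem hbB
      have hApos : 1 ≤ A.card := Finset.card_pos.mpr hAne
      have hBpos : 1 ≤ B.card := Finset.card_pos.mpr hBne
      have hcard' : A.card + (B.erase b).card ≤ (T.filter fun p => ¬ p.2 = b).card := by
        omega
      have hne' : (T.filter fun p => ¬ p.2 = b).Nonempty := Finset.card_pos.mp (by omega)
      have := ih (A.card + (B.erase b).card) (by omega) A (B.erase b) _ rfl hsub' hcard' hne'
      exact cycOut_mono (Finset.filter_subset _ _) this
    · push_neg at hA hB
      exact cyc_mindeg A B T hsub hne (fun a ha => hA a ha) (fun b hb => hB b hb)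

end Stmt12aux

namespace Stmt12aux
open Sum

variable {n : ℕ}

def pairToEdge (p : Fin n × Fin n) : Sym2 (Fin n ⊕ Fin n) := s(Sum.inl p.1, Sum.inr p.2)

lemma pairToEdge_inj : Function.Injective (pairToEdge (n := n)) := fun p q h => by
  obtain ⟨h1, h2⟩ := sym2_eq.mp h
  exact Prod.ext h1 h2

lemma sq_ident (hn : 2 ≤ n) : (n-1)*(n-1) = n^2 - 2*n + 1 := by
  obtain ⟨m, rfl⟩ : ∃ m, n = m + 1 := ⟨n-1, by omega⟩
  simp only [Nat.add_sub_cancel]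
  have h : (m+1)^2 = m*m + 2*m + 1 := by ring
  have h4 : 1*1 ≤ m * m := Nat.mul_le_mul (by omega) (by omega)
  rw [h]
  omega

lemma gfs_lower (hn3 : 3 ≤ n) {S : Set (Sym2 (Fin n ⊕ Fin n))} (hS : IsGFS (BG n) S) :
    (n-1) * (n-1) ≤ S.ncard := by
  haveI : NeZero n := ⟨by omega⟩
  classical
  by_contra hlt
  push_neg at hlt
  have hfin : S.Finite := Set.toFinite S
  set Srel : Finset (Fin n × Fin n) := Finset.univ.filter (fun p => pairToEdge p ∈ S) with hSrel
  set Trel : Finset (Fin n × Fin n) := Finset.univ.filter (fun p => ¬ pairToEdge p ∈ S)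
    with hTrel
  have himg : hfin.toFinset = Srel.image pairToEdge := by
    ext e
    rw [Set.Finite.mem_toFinset, Finset.mem_image]
    constructor
    · intro he
      obtain ⟨i, j, rfl⟩ := mem_edgeSet_iff.mp (hS.1 he)
      refine ⟨(i, j), ?_, rfl⟩
      rw [hSrel, Finset.mem_filter]
      exact ⟨Finset.mem_univ _, he⟩
    · rintro ⟨p, hp, rfl⟩
      rw [hSrel, Finset.mem_filter] at hp
      exact hp.2
  have hScard : S.ncard = Srel.card := by
    rw [Set.ncard_eq_toFinset_card S hfin, himg,
      Finset.card_image_of_injective _ pairToEdge_inj]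
  have hsplit := Finset.card_filter_add_card_filter_not (s := (Finset.univ : Finset (Fin n × Fin n)))
    (p := fun p => pairToEdge p ∈ S)
  have huniv : (Finset.univ : Finset (Fin n × Fin n)).card = n * n := by
    rw [Finset.card_univ, Fintype.card_prod, Fintype.card_fin]
  have hident : (n-1)*(n-1) + (2*n - 1) = n*n := by
    obtain ⟨m, rfl⟩ : ∃ m, n = m + 1 := ⟨n-1, by omega⟩
    simp only [Nat.add_sub_cancel]
    have h2 : 2*(m+1) - 1 = 2*m + 1 := by omega
    rw [h2]; ring
  have hSrelcard : Srel.card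
      = (Finset.univ.filter (fun p : Fin n × Fin n => pairToEdge p ∈ S)).card := rfl
  have hTrelcard : Trel.card
      = (Finset.univ.filter (fun p : Fin n × Fin n => ¬ pairToEdge p ∈ S)).card := rfl
  have hTcard : 2*n ≤ Trel.card := by omega
  have hTsub : Trel ⊆ (Finset.univ : Finset (Fin n)) ×ˢ (Finset.univ : Finset (Fin n)) := by
    intro p _
    simp [Finset.mem_product]
  have hucard : (Finset.univ : Finset (Fin n)).card + (Finset.univ : Finset (Fin n)).card
      = 2 * n := by
    rw [Finset.card_univ, Fintype.card_fin]; omega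
  have hTne : Trel.Nonempty := Finset.card_pos.mp (by omega)
  have hcyc := cyc_rel (2*n) Finset.univ Finset.univ Trel hucard hTsub (by omega) hTne
  obtain ⟨k, xs, ys, zs, hk2, hxl, hyl, hzl, hxnd, hynd, hperm, ⟨t0, ht0, hneq⟩, hclause⟩ := hcyc
  obtain ⟨σ, τ, hval, hout⟩ := ext_perm xs ys zs hxnd hynd hperm (by omega)
  have hστ : σ ≠ τ := by
    intro h
    have h1 := (hval t0 (by omega)).1
    have h2 := (hval t0 (by omega)).2
    rw [h] at h1
    exact hneq (h2.symm.trans h1)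
  -- helper: membership of clause pairs means the edge is not in S
  have hnotS : ∀ p : Fin n × Fin n, p ∈ Trel → pairToEdge p ∉ S := by
    intro p hp
    rw [hTrel, Finset.mem_filter] at hp
    exact hp.2
  have hint : Mp σ ∩ S = Mp τ ∩ S := by
    ext e
    constructor
    · rintro ⟨⟨v, rfl⟩, heS⟩
      by_cases hv : v ∈ xs
      · exfalso
        have hidx : xs.idxOf v < xs.length := List.idxOf_lt_length_iff.mpr hv
        have hgetd : xs.getD (xs.idxOf v) 0 = v := by
          rw [List.getD_eq_getElem _ _ hidx]
          exact List.getElem_idxOf hidx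
        have hσv : σ v = ys.getD (xs.idxOf v) 0 := by
          have h := (hval (xs.idxOf v) hidx).1
          rwa [hgetd] at h
        have hmem := (hclause (xs.idxOf v) (by omega)).1
        rw [hgetd, ← hσv] at hmem
        exact hnotS _ hmem heS
      · have hsame : σ v = τ v := hout v hv
        exact ⟨⟨v, by rw [hsame]⟩, heS⟩
    · rintro ⟨⟨v, rfl⟩, heS⟩
      by_cases hv : v ∈ xs
      · exfalso
        have hidx : xs.idxOf v < xs.length := List.idxOf_lt_length_iff.mpr hv
        have hgetd : xs.getD (xs.idxOf v) 0 = v := by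
          rw [List.getD_eq_getElem _ _ hidx]
          exact List.getElem_idxOf hidx
        have hτv : τ v = zs.getD (xs.idxOf v) 0 := by
          have h := (hval (xs.idxOf v) hidx).2
          rwa [hgetd] at h
        have hmem := (hclause (xs.idxOf v) (by omega)).2
        rw [hgetd, ← hτv] at hmem
        exact hnotS _ hmem heS
      · have hsame : σ v = τ v := hout v hv
        exact ⟨⟨v, by rw [← hsame]⟩, heS⟩
  exact hστ (Mp_inj (hS.2 (Mp σ) (Mp τ) (isPM_Mp σ) (isPM_Mp τ) hint))

lemma gf_val (hn3 : 3 ≤ n) :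
    sInf {k | ∃ S, IsGFS (BG n) S ∧ S.ncard = k} = n^2 - 2*n + 1 := by
  haveI : NeZero n := ⟨by omega⟩
  have hmem : (n-1)*(n-1) ∈ {k | ∃ S, IsGFS (BG n) S ∧ S.ncard = k} :=
    ⟨↑(SF0 n), isGFS_SF0, by rw [Set.ncard_coe_finset]; exact card_SF0⟩
  have h1 : sInf {k | ∃ S, IsGFS (BG n) S ∧ S.ncard = k} = (n-1)*(n-1) := by
    apply le_antisymm (Nat.sInf_le hmem)
    apply le_csInf ⟨_, hmem⟩
    rintro k ⟨S, hS, rfl⟩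
    exact gfs_lower hn3 hS
  rw [h1, sq_ident (by omega)]

end Stmt12aux


theorem stmt12 (n : ℕ) (hn : 3 ≤ n) :
    gf (completeBipartiteGraph (Fin n) (Fin n)) = n ^ 2 - 2 * n + 1 ∧
    (gf (completeBipartiteGraph (Fin n) (Fin n)) : ℤ) -
        (Af (completeBipartiteGraph (Fin n) (Fin n)) : ℤ) =
      ((n : ℤ) - 1) * ((n : ℤ) - 2) / 2 := by
  haveI : NeZero n := ⟨by omega⟩
  have hgf : gf (completeBipartiteGraph (Fin n) (Fin n)) = n ^ 2 - 2 * n + 1 :=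
    Stmt12aux.gf_val hn
  refine ⟨hgf, ?_⟩
  have hAf : Af (completeBipartiteGraph (Fin n) (Fin n)) = n * (n-1) / 2 := by
    have hset : {k | ∃ M, IsPM (completeBipartiteGraph (Fin n) (Fin n)) M ∧
        af (completeBipartiteGraph (Fin n) (Fin n)) M = k} = {n * (n-1) / 2} := by
      ext k
      simp only [Set.mem_setOf_eq, Set.mem_singleton_iff]
      constructor
      · rintro ⟨M, hM, rfl⟩
        obtain ⟨σ, rfl⟩ := Stmt12aux.isPM_iff.mp hM
        exact Stmt12aux.af_val σ
      · rintro rfl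
        exact ⟨Stmt12aux.Mp 1, Stmt12aux.isPM_Mp 1, Stmt12aux.af_val 1⟩
    show sSup {k | ∃ M, IsPM (completeBipartiteGraph (Fin n) (Fin n)) M ∧
        af (completeBipartiteGraph (Fin n) (Fin n)) M = k} = n * (n-1) / 2
    rw [hset, csSup_singleton]
  rw [hgf, hAf]
  obtain ⟨c, hc⟩ : ∃ c, n * (n-1) = 2 * c := by
    rcases Nat.even_or_odd n with h | h
    · obtain ⟨t, ht⟩ := h
      exact ⟨t * (n-1), by rw [ht]; ring⟩
    · obtain ⟨t, ht⟩ := h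
      have h1 : n - 1 = 2 * t := by omega
      exact ⟨n * t, by rw [h1]; ring⟩
  have hdiv : n * (n-1) / 2 = c := by omega
  rw [hdiv]
  have hc' : (n:ℤ) * ((n:ℤ) - 1) = 2 * (c:ℤ) := by
    have h0 := congrArg (fun x : ℕ => (x : ℤ)) hc
    simp only [Nat.cast_mul, Nat.cast_sub (show 1 ≤ n by omega), Nat.cast_ofNat,
      Nat.cast_one] at h0
    exact_mod_cast h0
  have hcast : ((n^2 - 2*n + 1 : ℕ) : ℤ) = ((n:ℤ)-1) * ((n:ℤ)-1) := by
    rw [← Stmt12aux.sq_ident (show 2 ≤ n by omega)]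
    rw [Nat.cast_mul, Nat.cast_sub (show 1 ≤ n by omega), Nat.cast_one]
  rw [hcast]
  have h2 : ((n:ℤ) - 1) * ((n:ℤ) - 2) = 2 * (((n:ℤ)-1) * ((n:ℤ)-1) - (c:ℤ)) := by
    linear_combination -hc'
  rw [h2, Int.mul_ediv_cancel_left _ two_ne_zero]
end

section
/- Let G be a connected graph with 2n vertices possessing a nice perfect matching (one attaining af(G,M) = (2e(G) − v(G))/4). Then gf(G) ≥ n − 1. -/
/-!
Ranking the edges of `M` orients every other edge towards the end whose matching edge is ranked
higher. From each edge of `M` pick the end with fewer outgoing edges; deleting the edges leaving the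
picked ends leaves `M` as the only perfect matching (consider a lowest-ranked edge of `M` missing
from another one). So `af(G, M) ≤ |E \ M| / 2`, and `4 af(G, M) = 2e - v` forces both ends of every
edge of `M` to have equal out-degree, for every ranking. Comparing the ranking that puts `xy` first
with the one that puts `uv` first and `xy` second shows that `x` and `y` have equally many
neighbours in `uv`, which makes `M` nice.

Given a global forcing set `S`, join two edges of `M` when they span a 4-cycle whose other two
edges avoid `S`. Switching `M` along a path of such 4-cycles shows that each component of this graph
has at most one edge outside `S`. By niceness, every edge of the quotient of `G` by these components comes
from an edge of `S \ M`; as this quotient is connected, there are at most `|S \ M| + 1` components,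
whence `n = |M| ≤ |S| + 1`.
-/

open SimpleGraph

variable {V : Type*}

theorem SimpleGraph.Connected.map_of_surjective {W : Type*} {G : SimpleGraph V} {f : V → W}
    (hG : G.Connected) (hf : Function.Surjective f) : (G.map f).Connected := by
  have hreach : ∀ x y, (G.map f).Reachable (f x) (f y) := fun x y => by
    rw [reachable_iff_reflTransGen]
    refine Relation.ReflTransGen.lift' f (fun u v huv => ?_) x y
      ((reachable_iff_reflTransGen _ _).mp (hG.preconnected x y))
    simp only [Function.onFun]
    by_cases h : f u = f v
    · exact h ▸ Relation.ReflTransGen.refl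
    · exact .single (map_adj_apply' huv h)
  refine (connected_iff _).mpr ⟨fun a b => ?_, hG.nonempty.map f⟩
  obtain ⟨x, rfl⟩ := hf a
  obtain ⟨y, rfl⟩ := hf b
  exact hreach x y

theorem isGFS_edgeSet (G : SimpleGraph V) : IsGFS G G.edgeSet :=
  ⟨subset_rfl, fun P P' hP hP' h => by
    rwa [Set.inter_eq_left.mpr hP.1, Set.inter_eq_left.mpr hP'.1] at h⟩

/-- Shi et al.'s characterization of nice perfect matchings; the other implications follow by
exchanging the roles of the two edges or of the ends of each edge. -/
def IsNiceMatching (G : SimpleGraph V) (M : Set (Sym2 V)) : Prop :=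
  ∀ ⦃x y u v : V⦄, s(x, y) ∈ M → s(u, v) ∈ M → s(x, y) ≠ s(u, v) → G.Adj x u → G.Adj y v

namespace IsPM

variable {G G' : SimpleGraph V} {M M' : Set (Sym2 V)}

theorem eq_of_mem (hM : IsPM G M) {e f : Sym2 V} {v : V} (he : e ∈ M) (hf : f ∈ M)
    (hve : v ∈ e) (hvf : v ∈ f) : e = f :=
  (hM.2 v).unique ⟨he, hve⟩ ⟨hf, hvf⟩

noncomputable def partner (hM : IsPM G M) (v : V) : V :=
  Sym2.Mem.other (hM.2 v).exists.choose_spec.2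

theorem mk_partner_mem (hM : IsPM G M) (v : V) : s(v, hM.partner v) ∈ M := by
  rw [partner, Sym2.other_spec]
  exact (hM.2 v).exists.choose_spec.1

theorem partner_eq_iff (hM : IsPM G M) {v w : V} : hM.partner v = w ↔ s(v, w) ∈ M := by
  refine ⟨fun h => h ▸ hM.mk_partner_mem v, fun h => ?_⟩
  exact Sym2.congr_right.mp (hM.eq_of_mem (hM.mk_partner_mem v) h
    (Sym2.mem_mk_left _ _) (Sym2.mem_mk_left _ _))

theorem adj_partner (hM : IsPM G M) (v : V) : G.Adj v (hM.partner v) := hM.1 (hM.mk_partner_mem v)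

theorem partner_ne (hM : IsPM G M) (v : V) : hM.partner v ≠ v := (hM.adj_partner v).ne'

theorem partner_partner (hM : IsPM G M) (v : V) : hM.partner (hM.partner v) = v := by
  rw [partner_eq_iff, Sym2.eq_swap]
  exact hM.mk_partner_mem v

theorem eq_mk_partner (hM : IsPM G M) {m : Sym2 V} (hm : m ∈ M) {v : V} (hv : v ∈ m) :
    m = s(v, hM.partner v) :=
  hM.eq_of_mem hm (hM.mk_partner_mem v) hv (Sym2.mem_mk_left _ _)

theorem mk_partner_eq_mk_partner_iff (hM : IsPM G M) {v w : V} :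
    s(v, hM.partner v) = s(w, hM.partner w) ↔ w = v ∨ w = hM.partner v := by
  refine ⟨fun h => Sym2.mem_iff.mp (h ▸ Sym2.mem_mk_left w _), ?_⟩
  rintro (rfl | rfl)
  · rfl
  · rw [partner_partner, Sym2.eq_swap]

theorem eq_of_subset (hM : IsPM G M) (hM' : IsPM G' M') (h : M ⊆ M') : M = M' := by
  refine h.antisymm fun z hz => ?_
  induction z using Sym2.ind with
  | _ a b =>
  rw [hM'.eq_of_mem hz (h (hM.mk_partner_mem a)) (Sym2.mem_mk_left a b) (Sym2.mem_mk_left _ _)]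
  exact hM.mk_partner_mem a

theorem card_eq [Fintype V] (hM : IsPM G M) : Fintype.card V = 2 * M.ncard := by
  classical
  have hfib := Finset.card_eq_sum_card_fiberwise (s := Finset.univ) (t := M.toFinset)
    (f := fun v => s(v, hM.partner v)) (fun v _ => by simpa using hM.mk_partner_mem v)
  rw [← Finset.card_univ, hfib, Set.ncard_eq_toFinset_card', mul_comm, ← smul_eq_mul,
    ← Finset.sum_const]
  refine Finset.sum_congr rfl fun m hm => ?_
  rw [Set.mem_toFinset] at hm
  rw [← Sym2.card_toFinset_of_not_isDiag m (G.not_isDiag_of_mem_edgeSet (hM.1 hm))]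
  congr 1
  ext v
  simp only [Finset.mem_filter, Finset.mem_univ, true_and, Sym2.mem_toFinset]
  exact ⟨fun h => h ▸ Sym2.mem_mk_left _ _, fun h => (hM.eq_mk_partner hm h).symm⟩

theorem of_forall_mk_mem_iff (f : V → V)
    (hf : ∀ v, G.Adj v (f v)) (hM : ∀ v w, s(v, w) ∈ M ↔ f v = w) : IsPM G M := by
  refine ⟨fun z hz => ?_, fun v => ⟨s(v, f v), ⟨(hM _ _).mpr rfl, Sym2.mem_mk_left _ _⟩, ?_⟩⟩
  · induction z using Sym2.ind with
    | _ a b => exact (hM a b).mp hz ▸ hf a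
  · rintro e ⟨he, hv⟩
    obtain ⟨b, rfl⟩ := Sym2.mem_iff_exists.mp hv
    rw [(hM v b).mp he]

theorem swap {P : Set (Sym2 V)} (hP : IsPM G P) {x y u v : V}
    (hxy : s(x, y) ∈ P) (huv : s(u, v) ∈ P) (hne : s(x, y) ≠ s(u, v))
    (hxu : G.Adj x u) (hyv : G.Adj y v) :
    IsPM G (P \ {s(x, y), s(u, v)} ∪ {s(x, u), s(y, v)}) := by
  classical
  have hpx : hP.partner x = y := hP.partner_eq_iff.mpr hxy
  have hpu : hP.partner u = v := hP.partner_eq_iff.mpr huv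
  have hpp := hP.partner_partner
  have hxy' : x ≠ y := G.ne_of_adj (hP.1 hxy)
  have huv' : u ≠ v := G.ne_of_adj (hP.1 huv)
  refine of_forall_mk_mem_iff (fun w => if w = x then u else if w = u then x else
    if w = y then v else if w = v then y else hP.partner w) (fun w => ?_) (fun a b => ?_)
  · have := hP.adj_partner w
    split_ifs <;> subst_vars <;> first | assumption | exact hxu.symm | exact hyv.symm
  · simp only [Set.mem_union, Set.mem_sdiff, Set.mem_insert_iff, Set.mem_singleton_iff,
      ← hP.partner_eq_iff, Sym2.eq_iff]
    grind

end IsPM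

section Ranking

open Finset
open scoped Classical

variable [Fintype V] {G : SimpleGraph V} {M : Set (Sym2 V)}

noncomputable def nonMatchingNeighbors (G : SimpleGraph V) (M : Set (Sym2 V)) (v : V) :
    Finset V :=
  {w | G.Adj v w ∧ s(v, w) ∉ M}

theorem mem_nonMatchingNeighbors {v w : V} :
    w ∈ nonMatchingNeighbors G M v ↔ G.Adj v w ∧ s(v, w) ∉ M := by
  simp [nonMatchingNeighbors]

namespace IsPM

variable (hM : IsPM G M)

/-- The ranking `r` orders the matching edges; every non-matching edge is counted at the end
whose matching edge is ranked lower. -/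
noncomputable def upperNeighbors (r : Sym2 V → ℕ) (v : V) : Finset V :=
  {w ∈ nonMatchingNeighbors G M v | r s(v, hM.partner v) < r s(w, hM.partner w)}

noncomputable def upperEdges (r : Sym2 V → ℕ) (T : Finset V) : Finset (Sym2 V) :=
  T.biUnion fun v => (hM.upperNeighbors r v).image fun w => s(v, w)

variable {hM} {r : Sym2 V → ℕ}

theorem mem_upperNeighbors {v w : V} : w ∈ hM.upperNeighbors r v ↔
    G.Adj v w ∧ s(v, w) ∉ M ∧ r s(v, hM.partner v) < r s(w, hM.partner w) := by
  simp [upperNeighbors, mem_nonMatchingNeighbors, and_assoc]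

theorem mem_upperEdges {T : Finset V} {z : Sym2 V} :
    z ∈ hM.upperEdges r T ↔ ∃ v ∈ T, ∃ w ∈ hM.upperNeighbors r v, s(v, w) = z := by
  simp [upperEdges]

variable (hM)

theorem mk_partner_ne_of_mem_nonMatchingNeighbors {v w : V}
    (hw : w ∈ nonMatchingNeighbors G M v) : s(v, hM.partner v) ≠ s(w, hM.partner w) := by
  rw [mem_nonMatchingNeighbors] at hw
  rw [Ne, hM.mk_partner_eq_mk_partner_iff]
  rintro (rfl | rfl)
  exacts [hw.1.ne rfl, hw.2 (hM.mk_partner_mem v)]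

theorem card_upperEdges (T : Finset V) :
    #(hM.upperEdges r T) = ∑ v ∈ T, #(hM.upperNeighbors r v) := by
  rw [upperEdges, card_biUnion]
  · exact sum_congr rfl fun v _ => card_image_of_injective _ fun _ _ => Sym2.congr_right.mp
  intro v _ v' _ hvv'
  simp only [Function.onFun, Finset.disjoint_left, mem_image, not_exists, not_and]
  rintro _ ⟨w, hw, rfl⟩ w' hw' h
  rw [mem_upperNeighbors] at hw hw'
  rcases Sym2.eq_iff.mp h with ⟨h1, -⟩ | ⟨rfl, rfl⟩
  · exact hvv' h1.symm
  · omega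

theorem coe_upperEdges_univ (hr : Function.Injective r) :
    (hM.upperEdges r univ : Set (Sym2 V)) = G.edgeSet \ M := by
  ext z
  simp only [mem_coe, mem_upperEdges, mem_univ, true_and, mem_upperNeighbors]
  constructor
  · rintro ⟨v, w, ⟨hvw, hM', -⟩, rfl⟩
    exact ⟨hvw, hM'⟩
  induction z using Sym2.ind with
  | _ a b =>
  rintro ⟨hab, habM⟩
  have hne := hr.ne (hM.mk_partner_ne_of_mem_nonMatchingNeighbors
    (mem_nonMatchingNeighbors.mpr ⟨hab, habM⟩))
  rcases hne.lt_or_gt with h | h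
  · exact ⟨a, b, ⟨hab, habM, h⟩, rfl⟩
  · rw [Sym2.eq_swap] at habM ⊢
    exact ⟨b, a, ⟨hab.symm, habM, h⟩, rfl⟩

theorem isAntiForcingSet_upperEdges (hr : Function.Injective r) {T : Finset V}
    (hT : ∀ v, v ∈ T ↔ hM.partner v ∉ T) : IsAntiForcingSet G M (hM.upperEdges r T) := by
  have hsub : (hM.upperEdges r T : Set (Sym2 V)) ⊆ G.edgeSet \ M := by
    rw [← hM.coe_upperEdges_univ hr]
    exact coe_subset.mpr (biUnion_subset_biUnion_of_subset_left _ (subset_univ T))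
  have hMdel : IsPM (G.deleteEdges (hM.upperEdges r T)) M :=
    ⟨fun m hm => by
      rw [edgeSet_deleteEdges]
      exact ⟨hM.1 hm, fun hmS => (hsub hmS).2 hm⟩, hM.2⟩
  refine ⟨hsub, M, hMdel, fun M' hM' => ?_⟩
  by_contra hne
  obtain ⟨m, hmM, hmM'⟩ : (M \ M').Nonempty := by
    by_contra h
    rw [Set.not_nonempty_iff_eq_empty, Set.sdiff_eq_empty] at h
    exact hne (hMdel.eq_of_subset hM' h).symm
  -- a lowest-ranked edge of `M` missing from `M'` has an end in `T`, whose `M'`-edge is upper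
  obtain ⟨m₀, ⟨hm₀M, hm₀M'⟩, hmin⟩ :=
    Set.exists_min_image _ r (Set.toFinite (M \ M')) ⟨m, hmM, hmM'⟩
  obtain ⟨v, hvT, rfl⟩ : ∃ v ∈ T, m₀ = s(v, hM.partner v) := by
    have h₁ := hM.eq_mk_partner hm₀M (Sym2.out_fst_mem m₀)
    by_cases h : m₀.out.1 ∈ T
    · exact ⟨_, h, h₁⟩
    · refine ⟨_, not_not.mp ((hT _).not.mp h), h₁.trans ?_⟩
      rw [hM.partner_partner, Sym2.eq_swap]
  set w := hM'.partner v
  have hvw : s(v, w) ∈ M' := hM'.mk_partner_mem v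
  have hvwE := (edgeSet_deleteEdges _ ▸ hM'.1 hvw : s(v, w) ∈ G.edgeSet \ _)
  have hvwM : s(v, w) ∉ M := fun h => hm₀M' (hM.eq_mk_partner h (Sym2.mem_mk_left _ _) ▸ hvw)
  have hwM' : s(w, hM.partner w) ∉ M' := fun h => hvwM <| by
    rw [hM'.eq_of_mem hvw h (Sym2.mem_mk_right _ _) (Sym2.mem_mk_left _ _)]
    exact hM.mk_partner_mem w
  have hup : w ∈ hM.upperNeighbors r v := by
    have hw : w ∈ nonMatchingNeighbors G M v := mem_nonMatchingNeighbors.mpr ⟨hvwE.1, hvwM⟩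
    refine mem_upperNeighbors.mpr ⟨hvwE.1, hvwM, lt_of_le_of_ne ?_ ?_⟩
    · exact hmin _ ⟨hM.mk_partner_mem w, hwM'⟩
    · exact hr.ne (hM.mk_partner_ne_of_mem_nonMatchingNeighbors hw)
  exact hvwE.2 (mem_upperEdges.mpr ⟨v, hvT, w, hup, rfl⟩)

theorem af_le_sum_card_upperNeighbors (hr : Function.Injective r) {T : Finset V}
    (hT : ∀ v, v ∈ T ↔ hM.partner v ∉ T) : af G M ≤ ∑ v ∈ T, #(hM.upperNeighbors r v) := by
  rw [← card_upperEdges]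
  exact Nat.sInf_le ⟨_, hM.isAntiForcingSet_upperEdges hr hT, Set.ncard_coe_finset _⟩

theorem exists_transversal_le (d : V → ℕ) :
    ∃ T : Finset V, (∀ v, v ∈ T ↔ hM.partner v ∉ T) ∧ ∀ v ∈ T, d v ≤ d (hM.partner v) := by
  set t := fun v => (Fintype.equivFin V v : ℕ)
  have ht : ∀ v, t v ≠ t (hM.partner v) := fun v h =>
    hM.partner_ne v ((Fintype.equivFin V).injective (Fin.ext h)).symm
  refine ⟨({v | d v < d (hM.partner v) ∨ d v = d (hM.partner v) ∧ t v < t (hM.partner v)} :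
    Finset V), fun v => ?_, fun v hv => ?_⟩
  · simp only [mem_filter, mem_univ, true_and, hM.partner_partner]
    have := ht v
    omega
  · simp only [mem_filter, mem_univ, true_and] at hv
    omega

theorem card_upperNeighbors_partner (haf : 2 * af G M = (G.edgeSet \ M).ncard)
    (hr : Function.Injective r) (v : V) :
    #(hM.upperNeighbors r (hM.partner v)) = #(hM.upperNeighbors r v) := by
  set d := fun v => #(hM.upperNeighbors r v)
  obtain ⟨T, hT, hle⟩ := hM.exists_transversal_le d
  have hT' : ∀ v, hM.partner v ∈ T ↔ v ∉ T := fun v => by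
    simpa only [hM.partner_partner] using hT (hM.partner v)
  have hcompl : ∑ v ∈ Tᶜ, d v = ∑ v ∈ T, d (hM.partner v) :=
    sum_nbij' hM.partner hM.partner
      (fun v hv => (hT' v).mpr (mem_compl.mp hv))
      (fun v hv => mem_compl.mpr ((hT v).mp hv))
      (fun v _ => hM.partner_partner v) (fun v _ => hM.partner_partner v)
      (fun v _ => by simp only [d, hM.partner_partner])
  have hsplit : (G.edgeSet \ M).ncard = ∑ v ∈ T, d v + ∑ v ∈ T, d (hM.partner v) := by
    rw [← hM.coe_upperEdges_univ hr, Set.ncard_coe_finset, card_upperEdges,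
      ← sum_add_sum_compl T, hcompl]
  have heq : ∑ v ∈ T, d v = ∑ v ∈ T, d (hM.partner v) := by
    have : af G M ≤ ∑ v ∈ T, d v := hM.af_le_sum_card_upperNeighbors hr hT
    have := sum_le_sum hle
    omega
  have hbal := (sum_eq_sum_iff_of_le hle).mp heq
  by_cases hv : v ∈ T
  · exact (hbal v hv).symm
  · simpa only [hM.partner_partner] using hbal _ ((hT' v).mpr hv)

end IsPM

noncomputable def rankBy (k : Sym2 V → ℕ) (z : Sym2 V) : ℕ :=
  Fintype.equivFin (Sym2 V) z + k z * Fintype.card (Sym2 V)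

theorem rankBy_injective (k : Sym2 V → ℕ) : Function.Injective (rankBy k) := fun a b h => by
  have hmod := congrArg (· % Fintype.card (Sym2 V)) h
  simp only [rankBy, Nat.add_mul_mod_self_right, Nat.mod_eq_of_lt (Fin.is_lt _)] at hmod
  exact (Fintype.equivFin _).injective (Fin.ext hmod)

theorem rankBy_lt_rankBy {k : Sym2 V → ℕ} {a b : Sym2 V} (h : k a < k b) :
    rankBy k a < rankBy k b := by
  have := Nat.mul_le_mul_right (Fintype.card (Sym2 V)) (Nat.succ_le_of_lt h)
  have := (Fintype.equivFin (Sym2 V) a).is_lt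
  simp only [rankBy, Nat.succ_mul] at *
  omega

theorem card_adj_in_mk {u v : V} (huv : u ≠ v) (w : V) :
    #{z | z ∈ s(u, v) ∧ G.Adj w z} =
      (if G.Adj w u then 1 else 0) + if G.Adj w v then 1 else 0 := by
  have : ({z | z ∈ s(u, v) ∧ G.Adj w z} : Finset V) = {z ∈ ({u, v} : Finset V) | G.Adj w z} := by
    ext z
    simp [Sym2.mem_iff]
  rw [this, card_filter, sum_pair huv]

noncomputable def putFirst (e : Sym2 V) (k : Sym2 V → ℕ) (z : Sym2 V) : ℕ :=
  if z = e then 0 else k z + 1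

namespace IsPM

variable (hM : IsPM G M)

theorem card_upperNeighbors_putFirst {x y u v w : V} (hxy : s(x, y) ∈ M) (huv : s(u, v) ∈ M)
    (hne : s(x, y) ≠ s(u, v)) (hw : w ∈ s(x, y)) :
    #(hM.upperNeighbors (rankBy (putFirst s(x, y) fun _ => 0)) w) =
      #(hM.upperNeighbors (rankBy (putFirst s(u, v) (putFirst s(x, y) fun _ => 0))) w) +
        #{z | z ∈ s(u, v) ∧ G.Adj w z} := by
  have hmw : s(w, hM.partner w) = s(x, y) := (hM.eq_mk_partner hxy hw).symm
  have hN : ∀ z ∈ nonMatchingNeighbors G M w, s(z, hM.partner z) ≠ s(x, y) := fun z hz =>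
    hmw ▸ (hM.mk_partner_ne_of_mem_nonMatchingNeighbors hz).symm
  have hmz : ∀ z, s(z, hM.partner z) = s(u, v) ↔ z ∈ s(u, v) := fun z =>
    ⟨fun h => h ▸ Sym2.mem_mk_left _ _, fun h => (hM.eq_mk_partner huv h).symm⟩
  have h₁ : hM.upperNeighbors (rankBy (putFirst s(x, y) fun _ => 0)) w =
      nonMatchingNeighbors G M w :=
    filter_true_of_mem fun z hz => rankBy_lt_rankBy (by simp [putFirst, hmw, hN z hz])
  have h₂ : hM.upperNeighbors (rankBy (putFirst s(u, v) (putFirst s(x, y) fun _ => 0))) w =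
      {z ∈ nonMatchingNeighbors G M w | z ∉ s(u, v)} := by
    refine filter_congr fun z hz => ?_
    by_cases hzuv : z ∈ s(u, v)
    · have hlt := rankBy_lt_rankBy (k := putFirst s(u, v) (putFirst s(x, y) fun _ => 0))
        (a := s(z, hM.partner z)) (b := s(w, hM.partner w))
        (by simp [putFirst, hmw, (hmz z).mpr hzuv, hne])
      simpa [hzuv] using hlt.le
    · apply iff_of_true _ hzuv
      exact rankBy_lt_rankBy (by simp [putFirst, hmw, hne, hN z hz, (hmz z).not.mpr hzuv])
  have h₃ : {z ∈ nonMatchingNeighbors G M w | z ∈ s(u, v)} =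
      ({z | z ∈ s(u, v) ∧ G.Adj w z} : Finset V) := by
    ext z
    simp only [mem_filter, mem_nonMatchingNeighbors, mem_univ, true_and]
    refine ⟨fun h => ⟨h.2, h.1.1⟩, fun h => ⟨⟨h.2, fun hwz => hne ?_⟩, h.1⟩⟩
    have := hM.eq_of_mem hwz huv (Sym2.mem_mk_right _ _) h.1
    exact hM.eq_of_mem hxy huv hw (this ▸ Sym2.mem_mk_left _ _)
  rw [h₁, h₂, ← h₃, add_comm]
  exact (card_filter_add_card_filter_not _).symm

theorem card_adj_in_mk_eq_of_af (hM : IsPM G M)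
    (haf : 2 * af G M = (G.edgeSet \ M).ncard)
    {x y u v : V} (hxy : s(x, y) ∈ M) (huv : s(u, v) ∈ M) (hne : s(x, y) ≠ s(u, v)) :
    #{z | z ∈ s(u, v) ∧ G.Adj x z} = #{z | z ∈ s(u, v) ∧ G.Adj y z} := by
  have hpx : hM.partner x = y := hM.partner_eq_iff.mpr hxy
  have b₁ := hM.card_upperNeighbors_partner haf (rankBy_injective (putFirst s(x, y) fun _ => 0)) x
  have b₂ := hM.card_upperNeighbors_partner haf
    (rankBy_injective (putFirst s(u, v) (putFirst s(x, y) fun _ => 0))) x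
  have e₁ := hM.card_upperNeighbors_putFirst hxy huv hne (Sym2.mem_mk_left x y)
  have e₂ := hM.card_upperNeighbors_putFirst hxy huv hne (Sym2.mem_mk_right x y)
  rw [hpx] at b₁ b₂
  omega

theorem isNiceMatching_of_af (hM : IsPM G M) (haf : 2 * af G M = (G.edgeSet \ M).ncard) :
    IsNiceMatching G M := by
  intro x y u v hxy huv hne hxu
  have h₁ := hM.card_adj_in_mk_eq_of_af haf hxy huv hne
  have h₂ := hM.card_adj_in_mk_eq_of_af haf huv hxy hne.symm
  rw [card_adj_in_mk (G.ne_of_adj (hM.1 huv)), card_adj_in_mk (G.ne_of_adj (hM.1 huv))] at h₁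
  rw [card_adj_in_mk (G.ne_of_adj (hM.1 hxy)), card_adj_in_mk (G.ne_of_adj (hM.1 hxy))] at h₂
  by_contra hyv
  simp only [G.adj_comm u, G.adj_comm v, hxu, hyv] at h₁ h₂
  split_ifs at h₁ h₂ <;> omega

end IsPM

end Ranking

/-- Matching edges `s(x, y)` and `s(u, v)` are adjacent when `x u` and `y v` are edges outside
`S`: switching the matching along the 4-cycle `x u v y` does not change its trace on `S`. -/
def swapGraph (G : SimpleGraph V) (M S : Set (Sym2 V)) : SimpleGraph M where
  Adj m m' := m ≠ m' ∧ ∃ x y u v, (m : Sym2 V) = s(x, y) ∧ (m' : Sym2 V) = s(u, v) ∧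
    G.Adj x u ∧ G.Adj y v ∧ s(x, u) ∉ S ∧ s(y, v) ∉ S
  symm := ⟨fun _ _ ⟨hne, x, y, u, v, h₁, h₂, hxu, hyv, hxuS, hyvS⟩ =>
    ⟨hne.symm, u, v, x, y, h₂, h₁, hxu.symm, hyv.symm, Sym2.eq_swap ▸ hxuS, Sym2.eq_swap ▸ hyvS⟩⟩
  loopless := ⟨fun _ h => h.1 rfl⟩

theorem swapGraph_adj {G : SimpleGraph V} {M S : Set (Sym2 V)} {m m' : M} :
    (swapGraph G M S).Adj m m' ↔ m ≠ m' ∧ ∃ x y u v, (m : Sym2 V) = s(x, y) ∧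
      (m' : Sym2 V) = s(u, v) ∧ G.Adj x u ∧ G.Adj y v ∧ s(x, u) ∉ S ∧ s(y, v) ∉ S :=
  Iff.rfl

namespace IsPM

variable {G : SimpleGraph V} {M S : Set (Sym2 V)}

theorem exists_isPM_switch {P : Set (Sym2 V)} (hP : IsPM G P) {a c : M}
    (hadj : (swapGraph G M S).Adj a c) (haP : ↑a ∈ P) (hcP : ↑c ∈ P) :
    ∃ P', IsPM G P' ∧ ↑a ∉ P' ∧ ↑c ∉ P' ∧ (∀ z ∈ P, z ≠ ↑a → z ≠ ↑c → z ∈ P') ∧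
      ∀ z ∈ S, z ∈ P' → z ∈ P := by
  obtain ⟨hac, x, y, u, v, hax, hcu, hxu, hyv, hxuS, hyvS⟩ := swapGraph_adj.mp hadj
  have hdisj : ∀ w, w ∈ (a : Sym2 V) → w ∉ (c : Sym2 V) := fun w h₁ h₂ =>
    hac (Subtype.ext (hP.eq_of_mem haP hcP h₁ h₂))
  refine ⟨P \ {↑a, ↑c} ∪ {s(x, u), s(y, v)}, ?_, ?_, ?_, fun z hz hza hzc => ?_, ?_⟩
  · rw [hax, hcu]
    exact hP.swap (hax ▸ haP) (hcu ▸ hcP) (hax ▸ hcu ▸ Subtype.coe_injective.ne hac) hxu hyv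
  · rintro (⟨-, h⟩ | h | h)
    · exact h (Or.inl rfl)
    · exact hdisj u (h ▸ Sym2.mem_mk_right x u) (hcu ▸ Sym2.mem_mk_left u v)
    · exact hdisj v (h ▸ Sym2.mem_mk_right y v) (hcu ▸ Sym2.mem_mk_right u v)
  · rintro (⟨-, h⟩ | h | h)
    · exact h (Or.inr rfl)
    · exact hdisj x (hax ▸ Sym2.mem_mk_left x y) (h ▸ Sym2.mem_mk_left x u)
    · exact hdisj y (hax ▸ Sym2.mem_mk_right x y) (h ▸ Sym2.mem_mk_left y v)
  · refine Or.inl ⟨hz, ?_⟩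
    rintro (h | h)
    exacts [hza h, hzc h]
  · rintro z hzS (⟨hz, -⟩ | rfl | rfl)
    exacts [hz, absurd hzS hxuS, absurd hzS hyvS]

/-- `P₁` switches `M` along the odd-numbered 4-cycles of `q`, `P₂` along the even-numbered ones. -/
theorem exists_isPM_of_isPath (hM : IsPM G M) {c b : M} (q : (swapGraph G M S).Walk c b)
    (hq : q.IsPath) :
    ∃ P₁ P₂, IsPM G P₁ ∧ IsPM G P₂ ∧ (∀ m : M, m ∉ q.support → ↑m ∈ P₁ ∧ ↑m ∈ P₂) ∧
      ↑c ∈ P₂ ∧ (c ≠ b → ↑c ∉ P₁) ∧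
      ∀ z ∈ S, z ≠ ↑c → z ≠ ↑b → (z ∈ P₁ ↔ z ∈ P₂) := by
  induction q with
  | nil =>
    exact ⟨M, M, hM, hM, fun m _ => ⟨m.2, m.2⟩, Subtype.mem _, fun h => absurd rfl h,
      fun _ _ _ _ => Iff.rfl⟩
  | @cons a c b hadj q ih =>
    obtain ⟨P₁, P₂, hP₁, hP₂, hoff, hcP₂, hcP₁, hagree⟩ := ih hq.of_cons
    obtain ⟨haP₁, haP₂⟩ := hoff a ((Walk.cons_isPath_iff _ _).mp hq).2
    obtain ⟨P, hP, haP, hcP, hkeep, hPS⟩ := hP₂.exists_isPM_switch hadj haP₂ hcP₂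
    refine ⟨P, P₁, hP, hP₁, fun m hm => ?_, haP₁, fun _ => haP, fun z hzS hza hzb => ?_⟩
    · rw [Walk.support_cons, List.mem_cons, not_or] at hm
      have hmc : m ≠ c := fun h => hm.2 (h ▸ q.start_mem_support)
      exact ⟨hkeep _ (hoff m hm.2).2 (Subtype.coe_injective.ne hm.1)
        (Subtype.coe_injective.ne hmc), (hoff m hm.2).1⟩
    · by_cases hzc : z = ↑c
      · subst hzc
        exact iff_of_false hcP (hcP₁ fun hcb => hzb (congrArg _ hcb))
      · rw [hagree z hzS hzc hzb]
        exact ⟨hPS z hzS, fun h => hkeep z h hza hzc⟩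

theorem mem_or_mem_of_reachable (hM : IsPM G M) (hS : IsGFS G S) {a b : M} (hab : a ≠ b)
    (h : (swapGraph G M S).Reachable a b) : ↑a ∈ S ∨ ↑b ∈ S := by
  by_contra! haS
  obtain ⟨q, hq⟩ := h.exists_isPath
  obtain ⟨P₁, P₂, hP₁, hP₂, -, haP₂, haP₁, hagree⟩ := hM.exists_isPM_of_isPath q hq
  have htrace : P₁ ∩ S = P₂ ∩ S := Set.ext fun z => and_congr_left fun hz =>
    hagree z hz (fun h => haS.1 (h ▸ hz)) (fun h => haS.2 (h ▸ hz))
  exact haP₁ hab (hS.2 _ _ hP₁ hP₂ htrace ▸ haP₂)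

theorem ncard_sdiff_le_card_connectedComponent [Finite V] (hM : IsPM G M) (hS : IsGFS G S) :
    (M \ S).ncard ≤ Nat.card (swapGraph G M S).ConnectedComponent := by
  rw [← Nat.card_coe_set_eq]
  refine Nat.card_le_card_of_injective
    (fun z => (swapGraph G M S).connectedComponentMk ⟨z, z.2.1⟩) fun z z' h => ?_
  by_contra hne
  rcases hM.mem_or_mem_of_reachable hS (fun h => hne (Subtype.ext (by simpa using h)))
    (ConnectedComponent.exact h) with h | h
  exacts [z.2.2 h, z'.2.2 h]

noncomputable def matchingComponent (hM : IsPM G M) (S : Set (Sym2 V)) (v : V) :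
    (swapGraph G M S).ConnectedComponent :=
  (swapGraph G M S).connectedComponentMk ⟨s(v, hM.partner v), hM.mk_partner_mem v⟩

theorem matchingComponent_partner (hM : IsPM G M) (v : V) :
    hM.matchingComponent S (hM.partner v) = hM.matchingComponent S v := by
  simp only [matchingComponent, hM.partner_partner, Sym2.eq_swap]

theorem matchingComponent_eq_of_mem (hM : IsPM G M) {a b : V} (h : s(a, b) ∈ M) :
    hM.matchingComponent S a = hM.matchingComponent S b := by
  rw [← hM.partner_eq_iff.mpr h, matchingComponent_partner]

theorem matchingComponent_surjective (hM : IsPM G M) :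
    Function.Surjective (hM.matchingComponent S) := by
  intro k
  induction k using ConnectedComponent.ind with
  | _ m =>
  refine ⟨(m : Sym2 V).out.1, congrArg _ (Subtype.ext ?_)⟩
  exact (hM.eq_mk_partner m.2 (Sym2.out_fst_mem _)).symm

/-- By niceness the partners of the ends of an edge `p q` are adjacent too; if `p q` joins two
components, the two edges do not form a swap edge, so one of them lies in `S`. -/
theorem edgeSet_map_matchingComponent_subset (hM : IsPM G M) (hnice : IsNiceMatching G M) :
    (G.map (hM.matchingComponent S)).edgeSet ⊆ Sym2.map (hM.matchingComponent S) '' (S \ M) := by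
  intro e he
  induction e using Sym2.ind with
  | _ k k' =>
  obtain ⟨hne, p, q, hpq, rfl, rfl⟩ := (map_adj' _ _ _ _).mp he
  have hmne : (⟨_, hM.mk_partner_mem p⟩ : M) ≠ ⟨_, hM.mk_partner_mem q⟩ := fun h =>
    hne (congrArg _ h)
  have hpq' := hnice (hM.mk_partner_mem p) (hM.mk_partner_mem q) (fun h => hmne (Subtype.ext h)) hpq
  have hS : s(p, q) ∈ S ∨ s(hM.partner p, hM.partner q) ∈ S := by
    by_contra! h
    exact hne (ConnectedComponent.sound (swapGraph_adj.mpr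
      ⟨hmne, _, _, _, _, rfl, rfl, hpq, hpq', h.1, h.2⟩).reachable)
  rcases hS with h | h
  · exact ⟨_, ⟨h, fun hM' => hne (hM.matchingComponent_eq_of_mem hM')⟩, Sym2.map_mk _ _ _⟩
  · refine ⟨_, ⟨h, fun hM' => hne ?_⟩, ?_⟩
    · simpa only [matchingComponent_partner] using hM.matchingComponent_eq_of_mem hM'
    · simp only [Sym2.map_mk, matchingComponent_partner]

end IsPM

theorem IsPM.ncard_le_ncard_add_one_of_isGFS [Finite V] {G : SimpleGraph V} {M S : Set (Sym2 V)}
    (hM : IsPM G M) (hnice : IsNiceMatching G M) (hG : G.Connected) (hS : IsGFS G S) :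
    M.ncard ≤ S.ncard + 1 := by
  have hcomp := hM.ncard_sdiff_le_card_connectedComponent hS
  have htree := (hG.map_of_surjective
    (hM.matchingComponent_surjective (S := S))).card_vert_le_card_edgeSet_add_one
  have hedges : (G.map (hM.matchingComponent S)).edgeSet.ncard ≤ (S \ M).ncard :=
    (Set.ncard_le_ncard (hM.edgeSet_map_matchingComponent_subset hnice)
      ((S \ M).toFinite.image _)).trans (Set.ncard_image_le (S \ M).toFinite)
  rw [Nat.card_coe_set_eq] at htree
  have hM' := Set.ncard_inter_add_ncard_sdiff_eq_ncard M S
  have hS' := Set.ncard_inter_add_ncard_sdiff_eq_ncard S M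
  rw [Set.inter_comm] at hS'
  omega

theorem stmt13 [Fintype V] (G : SimpleGraph V) (n : ℕ)
    (hcard : Fintype.card V = 2 * n) (hconn : G.Connected)
    (hnice : ∃ M, IsPM G M ∧
      (4 * af G M : ℤ) = 2 * (G.edgeSet.ncard : ℤ) - (Fintype.card V : ℤ)) :
    n - 1 ≤ gf G := by
  obtain ⟨M, hM, haf⟩ := hnice
  have hV := hM.card_eq
  have hE := Set.ncard_sdiff_add_ncard_of_subset hM.1 (Set.toFinite _)
  have haf' : 2 * af G M = (G.edgeSet \ M).ncard := by omega
  have hMnice := hM.isNiceMatching_of_af haf'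
  refine le_csInf ⟨_, G.edgeSet, isGFS_edgeSet G, rfl⟩ ?_
  rintro _ ⟨S, hS, rfl⟩
  have := hM.ncard_le_ncard_add_one_of_isGFS hMnice hconn hS
  omega
end

section
/- If the perfect matching polytope PM(G) of a graph G equals the set of all non-negative 1-regular vectors in R^{E(G)}, then G contains no two vertex-disjoint odd cycles C, C′ such that G − C − C′ has a perfect matching. -/
open SimpleGraph

variable {V : Type*}

/-!
The vector `x` equal to `1/2` on the edges of `C` and `C′` and to `1` on a perfect matching of
`G - C - C′` is non-negative and 1-regular, so by hypothesis it lies in `PM(G)`. But every perfect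
matching has an edge leaving the odd set `V(C)`, so `PM(G)` satisfies `x(∂(V(C))) ≥ 1`, whereas
`x` vanishes on `∂(V(C))`.
-/

namespace SimpleGraph.Walk

variable {G : SimpleGraph V}

lemma IsCycle.card_support_toFinset [DecidableEq V] {u : V} {c : G.Walk u u}
    (hc : c.IsCycle) : c.support.toFinset.card = c.length := by
  rw [← c.cons_tail_support, List.toFinset_cons,
    Finset.insert_eq_of_mem (List.mem_toFinset.mpr (c.end_mem_tail_support hc.not_nil)),
    List.toFinset_card_of_nodup hc.support_nodup, List.length_tail, length_support,
    Nat.add_sub_cancel]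

lemma IsCycle.ncard_incident_edges {u v : V} {c : G.Walk u u} (hc : c.IsCycle)
    (hv : v ∈ c.support) : {e ∈ c.edgeSet | v ∈ e}.ncard = 2 := by
  classical
  have hinc : c.toSubgraph.spanningCoe.incidenceSet v = {e ∈ c.edgeSet | v ∈ e} := by
    ext e
    simp [incidenceSet]
  rw [← hinc, ← Nat.card_coe_set_eq, Nat.card_congr (incidenceSetEquivNeighborSet _ v),
    Nat.card_coe_set_eq]
  exact hc.ncard_neighborSet_toSubgraph_eq_two hv

end SimpleGraph.Walk

lemma IsPM.even_card_of_closed {G : SimpleGraph V} {M : Set (Sym2 V)} (hM : IsPM G M)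
    (S : Finset V) (hS : ∀ e ∈ M, ∀ u ∈ e, ∀ w ∈ e, u ∈ S → w ∈ S) : Even S.card := by
  let H : G.Subgraph :=
    { verts := S
      Adj := fun u w => s(u, w) ∈ M ∧ u ∈ S
      adj_sub := fun h => hM.1 h.1
      edge_vert := fun h => h.2
      symm := ⟨fun u w h => ⟨Sym2.eq_swap ▸ h.1,
        hS _ h.1 u (Sym2.mem_mk_left u w) w (Sym2.mem_mk_right u w) h.2⟩⟩ }
  have hH : H.IsMatching := by
    intro v hv
    obtain ⟨e, ⟨heM, hve⟩, huniq⟩ := hM.2 v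
    obtain ⟨w, rfl⟩ := Sym2.mem_iff_exists.mp hve
    exact ⟨w, ⟨heM, hv⟩, fun w' hw' =>
      Sym2.congr_right.mp (huniq _ ⟨hw'.1, Sym2.mem_mk_left v w'⟩)⟩
  simpa [H] using hH.even_card

section PerfectMatchingPolytope

variable [Fintype V] [DecidableEq V]

open Classical in
/-- `∂(S)`, as a set of unordered pairs of vertices. -/
def edgeBoundary (S : Finset V) : Finset (Sym2 V) :=
  Finset.univ.filter fun e => ∃ u ∈ e, ∃ w ∈ e, u ∈ S ∧ w ∉ S

lemma IsPM.exists_mem_edgeBoundary {G : SimpleGraph V} {M : Set (Sym2 V)} (hM : IsPM G M)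
    {S : Finset V} (hS : Odd S.card) : ∃ e ∈ M, e ∈ edgeBoundary S := by
  by_contra! hno
  refine Nat.not_even_iff_odd.mpr hS (hM.even_card_of_closed S fun e he u hu w hw huS => ?_)
  by_contra hwS
  exact hno e he (Finset.mem_filter.mpr ⟨Finset.mem_univ e, u, hu, w, hw, huS, hwS⟩)

lemma convexHull_isPM_subset_edgeBoundary_sum_ge (G : SimpleGraph V) {S : Finset V}
    (hS : Odd S.card) :
    convexHull ℝ {x : Sym2 V → ℝ | ∃ M, IsPM G M ∧ x = M.indicator 1} ⊆
      {x | 1 ≤ ∑ e ∈ edgeBoundary S, x e} := by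
  refine convexHull_min ?_ (convex_halfSpace_ge ?_ 1)
  · rintro _ ⟨M, hM, rfl⟩
    obtain ⟨e, heM, he⟩ := hM.exists_mem_edgeBoundary hS
    calc (1 : ℝ) = M.indicator 1 e := by simp [Set.indicator_of_mem heM]
      _ ≤ ∑ e ∈ edgeBoundary S, M.indicator 1 e :=
        Finset.single_le_sum (fun e _ => Set.indicator_nonneg (fun _ _ => zero_le_one) e) he
  · exact ⟨fun x y => Finset.sum_add_distrib, fun c x => by simp [Finset.mul_sum]⟩

end PerfectMatchingPolytope

section CyclesMatchingVector

variable {G : SimpleGraph V} {a b : V} {c₁ : G.Walk a a} {c₂ : G.Walk b b} {M₀ : Set (Sym2 V)}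

lemma sum_incident_indicator_const [Fintype V] [DecidableEq V] (S : Set (Sym2 V)) (r : ℝ) (v : V) :
    ∑ e ∈ Finset.univ.filter (fun e : Sym2 V => v ∈ e), S.indicator (fun _ => r) e =
      {e ∈ S | v ∈ e}.ncard * r := by
  classical
  rw [Finset.sum_indicator_eq_sum_filter, Finset.sum_const, nsmul_eq_mul, ← Set.ncard_coe_finset]
  congr 3
  ext e
  simp [and_comm]

noncomputable def cyclesMatchingVector (c₁ : G.Walk a a) (c₂ : G.Walk b b) (M₀ : Set (Sym2 V)) :
    Sym2 V → ℝ :=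
  c₁.edgeSet.indicator (fun _ => 1 / 2) + c₂.edgeSet.indicator (fun _ => 1 / 2) +
    M₀.indicator (fun _ => 1)

lemma cyclesMatchingVector_nonneg (e : Sym2 V) : 0 ≤ cyclesMatchingVector c₁ c₂ M₀ e := by
  simp only [cyclesMatchingVector, Pi.add_apply, Set.indicator]
  split_ifs <;> norm_num

lemma cyclesMatchingVector_eq_zero_of_notMem_edgeSet (hM₀E : M₀ ⊆ G.edgeSet) {e : Sym2 V}
    (he : e ∉ G.edgeSet) : cyclesMatchingVector c₁ c₂ M₀ e = 0 := by
  have hc {u : V} (c : G.Walk u u) : e ∉ c.edgeSet := fun h => he (c.edges_subset_edgeSet h)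
  have hM : e ∉ M₀ := fun h => he (hM₀E h)
  simp [cyclesMatchingVector, hc, hM]

lemma sum_incident_cyclesMatchingVector [Fintype V] [DecidableEq V] (hc₁ : c₁.IsCycle)
    (hc₂ : c₂.IsCycle) (hdisj : ∀ w, w ∈ c₁.support → w ∉ c₂.support)
    (hM₀A : ∀ e ∈ M₀, ∀ v, v ∈ e → v ∉ ({w | w ∈ c₁.support} ∪ {w | w ∈ c₂.support}))
    (hM₀u : ∀ v, v ∉ ({w | w ∈ c₁.support} ∪ {w | w ∈ c₂.support}) → ∃! e, e ∈ M₀ ∧ v ∈ e)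
    (v : V) :
    ∑ e ∈ Finset.univ.filter (fun e : Sym2 V => v ∈ e), cyclesMatchingVector c₁ c₂ M₀ e = 1 := by
  have hcycle {u : V} (c : G.Walk u u) (hv : v ∉ c.support) : {e ∈ c.edgeSet | v ∈ e} = ∅ :=
    Set.eq_empty_of_forall_notMem fun e he => hv (c.mem_support_of_mem_edges he.1 he.2)
  have hmatch (hv : v ∈ ({w | w ∈ c₁.support} ∪ {w | w ∈ c₂.support} : Set V)) :
      {e ∈ M₀ | v ∈ e} = ∅ :=
    Set.eq_empty_of_forall_notMem fun e he => hM₀A e he.1 v he.2 hv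
  simp only [cyclesMatchingVector, Pi.add_apply, Finset.sum_add_distrib,
    sum_incident_indicator_const]
  by_cases hv₁ : v ∈ c₁.support
  · rw [hc₁.ncard_incident_edges hv₁, hcycle c₂ (hdisj v hv₁), hmatch (Or.inl hv₁)]
    norm_num
  by_cases hv₂ : v ∈ c₂.support
  · rw [hc₂.ncard_incident_edges hv₂, hcycle c₁ hv₁, hmatch (Or.inr hv₂)]
    norm_num
  obtain ⟨e, he, huniq⟩ := hM₀u v (by simp [hv₁, hv₂])
  have hone : {e ∈ M₀ | v ∈ e} = {e} := Set.eq_singleton_iff_unique_mem.mpr ⟨he, huniq⟩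
  rw [hcycle c₁ hv₁, hcycle c₂ hv₂, hone, Set.ncard_singleton]
  norm_num

lemma cyclesMatchingVector_eq_zero_of_mem_edgeBoundary [Fintype V] [DecidableEq V]
    (hdisj : ∀ w, w ∈ c₁.support → w ∉ c₂.support)
    (hM₀A : ∀ e ∈ M₀, ∀ v, v ∈ e → v ∉ ({w | w ∈ c₁.support} ∪ {w | w ∈ c₂.support}))
    {e : Sym2 V} (he : e ∈ edgeBoundary c₁.support.toFinset) :
    cyclesMatchingVector c₁ c₂ M₀ e = 0 := by
  obtain ⟨-, u, hu, w, hw, hu₁, hw₁⟩ := Finset.mem_filter.mp he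
  rw [List.mem_toFinset] at hu₁ hw₁
  have h₁ : e ∉ c₁.edgeSet := fun h => hw₁ (c₁.mem_support_of_mem_edges h hw)
  have h₂ : e ∉ c₂.edgeSet := fun h => hdisj u hu₁ (c₂.mem_support_of_mem_edges h hu)
  have h₀ : e ∉ M₀ := fun h => hM₀A e h u hu (Or.inl hu₁)
  simp [cyclesMatchingVector, h₁, h₂, h₀]

end CyclesMatchingVector

theorem stmt18 [Fintype V] [DecidableEq V] (G : SimpleGraph V)
    (hpoly : convexHull ℝ {x : Sym2 V → ℝ | ∃ M, IsPM G M ∧ x = M.indicator 1} =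
      {x : Sym2 V → ℝ | (∀ e, 0 ≤ x e) ∧ (∀ e, e ∉ G.edgeSet → x e = 0) ∧
        ∀ v : V, ∑ e ∈ Finset.univ.filter (fun e : Sym2 V => v ∈ e), x e = 1}) :
    ¬ ∃ (a b : V) (c₁ : G.Walk a a) (c₂ : G.Walk b b),
      c₁.IsCycle ∧ c₂.IsCycle ∧ Odd c₁.length ∧ Odd c₂.length ∧
      (∀ w, w ∈ c₁.support → w ∉ c₂.support) ∧
      PMAvoiding G ({w | w ∈ c₁.support} ∪ {w | w ∈ c₂.support}) := by
  rintro ⟨a, b, c₁, c₂, hc₁, hc₂, hodd, -, hdisj, M₀, hM₀E, hM₀A, hM₀u⟩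
  have hx : cyclesMatchingVector c₁ c₂ M₀ ∈
      convexHull ℝ {x | ∃ M, IsPM G M ∧ x = M.indicator 1} := by
    rw [hpoly]
    exact ⟨cyclesMatchingVector_nonneg,
      fun _ => cyclesMatchingVector_eq_zero_of_notMem_edgeSet hM₀E,
      sum_incident_cyclesMatchingVector hc₁ hc₂ hdisj hM₀A hM₀u⟩
  have hcut : 1 ≤ ∑ e ∈ edgeBoundary c₁.support.toFinset, cyclesMatchingVector c₁ c₂ M₀ e :=
    convexHull_isPM_subset_edgeBoundary_sum_ge G (hc₁.card_support_toFinset ▸ hodd) hx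
  rw [Finset.sum_eq_zero fun e he =>
    cyclesMatchingVector_eq_zero_of_mem_edgeBoundary hdisj hM₀A he] at hcut
  exact absurd hcut zero_lt_one.not_ge
end
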